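/- arXiv:2104.03950 — 10 statements merged into one kernel-verified Lean document; each statement's English description precedes it below -/
import Mathlib

section
/- Let G be the group of bijections of the real plane generated by the translation T(u,v) = (u+1, v+1) and the map R(u,v) = (-v, -u). Then: (i) for every point (u,v) in R^2 with u >= v there exists g in G such that g(u,v) = (u',v') satisfies u' >= v' and 0 <= u' + v' <= 1; (ii) if (u,v) and (u',v') both satisfy u >= v, u' >= v', 0 < u+v < 1, 0 < u'+v' < 1, and lie in the same G-orbit, then (u,v) = (u',v'). -/
/-!
Both generators preserve `u - v` and act on `s = u + v` by `s ↦ s + 2` and `s ↦ -s`, so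
`(u - v, cos (π (u + v)))` is constant on `G`-orbits. Since `cos` is injective on `[0, π]`, this
invariant separates points with `u + v ∈ [0, 1]`. Conversely, a power of `T` brings `u + v` into
`[0, 2)`, and if it lands in `(1, 2)` the map `T ∘ R`, i.e. `s ↦ 2 - s`, brings it into `(0, 1)`.
-/

/-- The translation `T(u,v) = (u+1, v+1)` as a bijection of the real plane. -/
def shearT : Equiv.Perm (ℝ × ℝ) where
  toFun p := (p.1 + 1, p.2 + 1)
  invFun p := (p.1 - 1, p.2 - 1)
  left_inv p := by simp
  right_inv p := by simp

/-- The map `R(u,v) = (-v, -u)` as a bijection of the real plane. -/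
def reflR : Equiv.Perm (ℝ × ℝ) where
  toFun p := (-p.2, -p.1)
  invFun p := (-p.2, -p.1)
  left_inv p := by simp
  right_inv p := by simp

open Real Set

theorem shearT_apply (p : ℝ × ℝ) : shearT p = (p.1 + 1, p.2 + 1) := rfl

theorem shearT_inv_apply (p : ℝ × ℝ) : shearT⁻¹ p = (p.1 - 1, p.2 - 1) := rfl

theorem reflR_apply (p : ℝ × ℝ) : reflR p = (-p.2, -p.1) := rfl

theorem Equiv.Perm.comp_eq_of_mem_closure {α β : Type*} {f : α → β} {S : Set (Equiv.Perm α)}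
    (hS : ∀ s ∈ S, f ∘ s = f) {g : Equiv.Perm α} (hg : g ∈ Subgroup.closure S) : f ∘ g = f := by
  induction hg using Subgroup.closure_induction with
  | mem s hs => exact hS s hs
  | one => rfl
  | mul a b _ _ iha ihb => rw [Equiv.Perm.coe_mul, ← Function.comp_assoc, iha, ihb]
  | inv a _ iha =>
    funext x
    simpa using (congrFun iha (a⁻¹ x)).symm

theorem shearT_zpow_apply (n : ℤ) (p : ℝ × ℝ) : (shearT ^ n) p = (p.1 + n, p.2 + n) := by
  induction n using Int.induction_on generalizing p with
  | zero => simp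
  | succ n ih =>
    rw [zpow_add_one, Equiv.Perm.mul_apply, shearT_apply, ih]
    push_cast
    ring_nf
  | pred n ih =>
    rw [zpow_sub_one, Equiv.Perm.mul_apply, shearT_inv_apply, ih]
    push_cast
    ring_nf

noncomputable def orbitInvariant (p : ℝ × ℝ) : ℝ × ℝ :=
  (p.1 - p.2, cos (π * (p.1 + p.2)))

theorem orbitInvariant_apply_of_mem_closure {g : Equiv.Perm (ℝ × ℝ)}
    (hg : g ∈ Subgroup.closure {shearT, reflR}) (p : ℝ × ℝ) :
    orbitInvariant (g p) = orbitInvariant p := by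
  refine congrFun (Equiv.Perm.comp_eq_of_mem_closure (f := orbitInvariant) ?_ hg) p
  rintro s (rfl | rfl) <;> funext q <;> simp only [orbitInvariant, Function.comp_apply]
  · rw [shearT_apply, ← cos_add_two_pi (π * (q.1 + q.2))]
    congr 1 <;> ring_nf
  · rw [reflR_apply, ← cos_neg]
    congr 1 <;> ring_nf

theorem eq_of_orbitInvariant_eq {p q : ℝ × ℝ} (h : orbitInvariant p = orbitInvariant q)
    (hp : p.1 + p.2 ∈ Icc 0 1) (hq : q.1 + q.2 ∈ Icc 0 1) : p = q := by
  simp only [orbitInvariant, Prod.mk.injEq] at h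
  obtain ⟨hdiff, hcos⟩ := h
  have mem_Icc {x : ℝ} (hx : x ∈ Icc 0 1) : π * x ∈ Icc 0 π :=
    ⟨mul_nonneg pi_pos.le hx.1, mul_le_of_le_one_right pi_pos.le hx.2⟩
  have hsum : π * (p.1 + p.2) = π * (q.1 + q.2) := injOn_cos (mem_Icc hp) (mem_Icc hq) hcos
  have hsum' : p.1 + p.2 = q.1 + q.2 := mul_left_cancel₀ pi_ne_zero hsum
  exact Prod.ext (by linarith) (by linarith)

theorem exists_mem_closure_sum_mem_Icc (p : ℝ × ℝ) :
    ∃ g ∈ Subgroup.closure ({shearT, reflR} : Set (Equiv.Perm (ℝ × ℝ))),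
      (g p).1 + (g p).2 ∈ Icc 0 1 := by
  have hT : shearT ∈ Subgroup.closure ({shearT, reflR} : Set (Equiv.Perm (ℝ × ℝ))) :=
    Subgroup.subset_closure (mem_insert _ _)
  have hR : reflR ∈ Subgroup.closure ({shearT, reflR} : Set (Equiv.Perm (ℝ × ℝ))) :=
    Subgroup.subset_closure (mem_insert_of_mem _ rfl)
  set m : ℤ := ⌊(p.1 + p.2) / 2⌋
  have hm_le : 2 * (m : ℝ) ≤ p.1 + p.2 := by linarith [Int.floor_le ((p.1 + p.2) / 2)]
  have hm_lt : p.1 + p.2 < 2 * m + 2 := by linarith [Int.lt_floor_add_one ((p.1 + p.2) / 2)]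
  have hTm : shearT ^ (-m) ∈ Subgroup.closure ({shearT, reflR} : Set (Equiv.Perm (ℝ × ℝ))) :=
    Subgroup.zpow_mem _ hT _
  by_cases hs : p.1 + p.2 - 2 * m ≤ 1
  · refine ⟨shearT ^ (-m), hTm, ?_⟩
    rw [shearT_zpow_apply]
    push_cast
    constructor <;> linarith
  · refine ⟨shearT * reflR * shearT ^ (-m), Subgroup.mul_mem _ (Subgroup.mul_mem _ hT hR) hTm, ?_⟩
    simp only [Equiv.Perm.mul_apply, shearT_zpow_apply, reflR_apply, shearT_apply]
    push_cast
    constructor <;> linarith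

theorem stmt0 :
    (∀ p : ℝ × ℝ, p.2 ≤ p.1 →
      ∃ g ∈ Subgroup.closure ({shearT, reflR} : Set (Equiv.Perm (ℝ × ℝ))),
        (g p).2 ≤ (g p).1 ∧ 0 ≤ (g p).1 + (g p).2 ∧ (g p).1 + (g p).2 ≤ 1) ∧
    (∀ p q : ℝ × ℝ, p.2 ≤ p.1 → q.2 ≤ q.1 →
      0 < p.1 + p.2 → p.1 + p.2 < 1 →
      0 < q.1 + q.2 → q.1 + q.2 < 1 →
      (∃ g ∈ Subgroup.closure ({shearT, reflR} : Set (Equiv.Perm (ℝ × ℝ))), g p = q) →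
      p = q) := by
  constructor
  · intro p hp
    obtain ⟨g, hg, hsum⟩ := exists_mem_closure_sum_mem_Icc p
    have hdiff := congrArg Prod.fst (orbitInvariant_apply_of_mem_closure hg p)
    simp only [orbitInvariant] at hdiff
    exact ⟨g, hg, by linarith, hsum⟩
  · rintro p q - - hp0 hp1 hq0 hq1 ⟨g, hg, rfl⟩
    exact eq_of_orbitInvariant_eq (orbitInvariant_apply_of_mem_closure hg p).symm
      ⟨hp0.le, hp1.le⟩ ⟨hq0.le, hq1.le⟩
end

section
/- Let K >= 4 be an even integer, and set a = 2K-3, b = 2K-1, m = K^2 - (7/2)K + 2 (an integer since K is even). Let Delta_K be the closed triangle in R^2 with vertices (-1/a, 0), (m-K+2, 0), and (m, (K-2)b/2). Then the number of integer lattice points contained in Delta_K is exactly m(m+1)/2 + 1. -/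
/-!
Write `K = 2n + 2`, so that `a = 4n + 1`, `b = 4n + 3`, `m = 4n² + n - 1` and `Δ_K` has vertices
`(-1/a, 0)`, `(m - 2n, 0)`, `(m, nb)`. Since `am + 1 = n(a - 2)b`, the left edge lies on the line
`(a - 2)y = ax + 1` and the right edge on `b(x - m + 2n) = 2y`, so the lattice points of height `y`
are the integers `x` with `y - ⌊(2y + 1)/a⌋ ≤ x ≤ m - 2n + ⌊2y/b⌋`, for `0 ≤ y ≤ nb`.
Summing over the rows, the floor sums are evaluated period by period: `⌊(2y + c)/q⌋` grows by `2`
when `y` grows by `q`, and over one period `q = 2u + 1` it adds up to `u + c` (for `c ≤ 1`).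
-/

open Finset

theorem smul_add_smul_add_smul_mem_convexHull {E : Type*} [AddCommGroup E] [Module ℝ E]
    {u v w : E} {α β γ : ℝ} (hα : 0 ≤ α) (hβ : 0 ≤ β) (hγ : 0 ≤ γ) (hsum : α + β + γ = 1) :
    α • u + β • v + γ • w ∈ convexHull ℝ {u, v, w} := by
  have := (convex_convexHull ℝ {u, v, w}).sum_mem (t := univ) (w := ![α, β, γ])
    (z := ![u, v, w]) (by simp [Fin.forall_fin_succ, hα, hβ, hγ])
    (by simp [Fin.sum_univ_three, hsum])
    (fun i _ => subset_convexHull ℝ _ (by fin_cases i <;> simp))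
  simpa [Fin.sum_univ_three] using this

theorem mem_convexHull_triangle_iff {x₀ x₁ x₂ h : ℝ} (hx : x₀ < x₁) (hh : 0 < h) (p : ℝ × ℝ) :
    p ∈ convexHull ℝ {(x₀, 0), (x₁, 0), (x₂, h)} ↔
      0 ≤ p.2 ∧ (x₂ - x₀) * p.2 ≤ h * (p.1 - x₀) ∧ h * (p.1 - x₁) ≤ (x₂ - x₁) * p.2 := by
  constructor
  · refine fun hp => convexHull_min (t := {q : ℝ × ℝ | 0 ≤ q.2 ∧
      (x₂ - x₀) * q.2 ≤ h * (q.1 - x₀) ∧ h * (q.1 - x₁) ≤ (x₂ - x₁) * q.2}) ?_ ?_ hp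
    · rintro q (rfl | rfl | rfl) <;> simp only [Set.mem_ofPred_eq] <;> refine ⟨?_, ?_, ?_⟩ <;>
        nlinarith
    · rintro q ⟨hq₁, hq₂, hq₃⟩ r ⟨hr₁, hr₂, hr₃⟩ s t hs ht hst
      simp only [Set.mem_ofPred_eq, Prod.fst_add, Prod.snd_add, Prod.smul_fst, Prod.smul_snd,
        smul_eq_mul]
      obtain rfl : t = 1 - s := by linarith
      refine ⟨by positivity, ?_, ?_⟩
      · nlinarith [mul_le_mul_of_nonneg_left hq₂ hs, mul_le_mul_of_nonneg_left hr₂ ht]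
      · nlinarith [mul_le_mul_of_nonneg_left hq₃ hs, mul_le_mul_of_nonneg_left hr₃ ht]
  · rintro ⟨h₁, h₂, h₃⟩
    have hx' : x₁ - x₀ ≠ 0 := sub_ne_zero.mpr hx.ne'
    have hd : 0 < h * (x₁ - x₀) := mul_pos hh (by linarith)
    have key := smul_add_smul_add_smul_mem_convexHull (u := (x₀, (0 : ℝ))) (v := (x₁, 0))
      (w := (x₂, h)) (α := (h * (x₁ - p.1) + (x₂ - x₁) * p.2) / (h * (x₁ - x₀)))
      (β := (h * (p.1 - x₀) - (x₂ - x₀) * p.2) / (h * (x₁ - x₀))) (γ := p.2 / h)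
      (div_nonneg (by linarith) hd.le) (div_nonneg (by linarith) hd.le) (div_nonneg h₁ hh.le)
      (by field_simp; ring)
    convert key using 1
    ext <;> simp only [Prod.smul_mk, smul_eq_mul, mul_zero, Prod.mk_add_mk, add_zero, zero_add]
    · field_simp
      ring
    · field_simp

theorem ncard_eq_sum_rows {S : Set (ℤ × ℤ)} (Y : Finset ℤ) (L R : ℤ → ℤ)
    (hLR : ∀ y ∈ Y, L y ≤ R y + 1) (hS : ∀ x y, (x, y) ∈ S ↔ y ∈ Y ∧ L y ≤ x ∧ x ≤ R y) :
    (S.ncard : ℤ) = ∑ y ∈ Y, (R y + 1 - L y) := by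
  classical
  have hS' : S = ↑(Y.biUnion fun y => Icc (L y) (R y) ×ˢ {y}) := by
    ext ⟨x, y⟩
    simp [hS, and_comm, and_assoc]
  have hdisj : (Y : Set ℤ).PairwiseDisjoint fun y => Icc (L y) (R y) ×ˢ {y} :=
    fun y _ y' _ hne => disjoint_left.mpr fun ⟨x, z⟩ h h' => by
      simp only [mem_product, mem_singleton] at h h'
      exact hne (h.2.symm.trans h'.2)
  rw [hS', Set.ncard_coe_finset, card_biUnion hdisj]
  push_cast
  refine sum_congr rfl fun y hy => ?_
  rw [card_product, card_singleton, mul_one, Int.card_Icc,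
    Int.toNat_of_nonneg (by linarith [hLR y hy])]

theorem sum_Icc_zero_eq_sum_range {M : Type*} [AddCommMonoid M] (N : ℕ) (f : ℤ → M) :
    ∑ y ∈ Icc (0 : ℤ) N, f y = ∑ k ∈ range (N + 1), f k := by
  rw [Int.Icc_eq_finset_map, sum_map, show ((N : ℤ) + 1 - 0).toNat = N + 1 by omega]
  simp

theorem sum_range_mul_of_map_add {M : Type*} [AddCommMonoid M] (f : ℕ → M) {q : ℕ} {d : M}
    (hf : ∀ y, f (y + q) = f y + d) (n : ℕ) :
    ∑ y ∈ range (n * q), f y = n • ∑ r ∈ range q, f r + (q * ∑ j ∈ range n, j) • d := by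
  have hshift : ∀ j r, f (j * q + r) = f r + j • d := by
    intro j r
    induction j with
    | zero => simp
    | succ j ih => rw [succ_nsmul, ← add_assoc, ← ih, add_mul, one_mul, add_right_comm, hf]
  induction n with
  | zero => simp
  | succ n ih =>
    rw [add_mul, one_mul, sum_range_add, ih]
    simp only [hshift, sum_add_distrib, sum_const, card_range, sum_range_succ, mul_add, add_nsmul,
      one_nsmul, smul_smul]
    abel

theorem sum_range_two_mul_add_div {u c : ℕ} (hc : c ≤ 1) :
    ∑ r ∈ range (2 * u + 1), (2 * r + c) / (2 * u + 1) = u + c := by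
  rw [show 2 * u + 1 = (u + 1 - c) + (u + c) by omega, sum_range_add,
    sum_eq_zero fun r hr => Nat.div_eq_of_lt (by simp at hr; omega),
    sum_congr rfl fun r hr => Nat.div_eq_of_lt_le (k := 1) (by omega) (by simp at hr; omega)]
  simp

theorem sum_range_mul_two_mul_add_div (n u : ℕ) {c : ℕ} (hc : c ≤ 1) :
    ∑ y ∈ range (n * (2 * u + 1)), (2 * y + c) / (2 * u + 1) =
      n * (u + c) + (2 * u + 1) * (∑ j ∈ range n, j) * 2 := by
  rw [sum_range_mul_of_map_add _ (d := 2) (fun y => ?_), sum_range_two_mul_add_div hc]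
  · simp
  · rw [mul_add, add_right_comm, Nat.add_mul_div_right _ _ (by omega)]

section Triangle

variable (n : ℕ)

/-- The triangle `Δ_K` for `K = 2n + 2`. -/
def deltaTriangle : Set (ℝ × ℝ) :=
  convexHull ℝ {((-1 / (4 * n + 1) : ℝ), 0), ((4 * n ^ 2 - n - 1 : ℝ), 0),
    ((4 * n ^ 2 + n - 1 : ℝ), (n * (4 * n + 3) : ℝ))}

theorem mem_deltaTriangle_iff (hn : 1 ≤ n) (x y : ℝ) :
    (x, y) ∈ deltaTriangle n ↔
      0 ≤ y ∧ (4 * n - 1) * y ≤ (4 * n + 1) * x + 1 ∧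
        (4 * n + 3) * (x - (4 * n ^ 2 - n - 1)) ≤ 2 * y := by
  have hn' : (1 : ℝ) ≤ n := by exact_mod_cast hn
  have ha : (0 : ℝ) < 4 * n + 1 := by positivity
  rw [deltaTriangle, mem_convexHull_triangle_iff
    ((div_neg_of_neg_of_pos (by norm_num) ha).trans_le (by nlinarith)) (by positivity)]
  refine and_congr_right fun _ => and_congr ?_ ?_
  · have e : n * (4 * n + 3) * (x - -1 / (4 * n + 1)) -
          (4 * n ^ 2 + n - 1 - -1 / (4 * n + 1)) * y =
        n * (4 * n + 3) / (4 * n + 1) * ((4 * n + 1) * x + 1 - (4 * n - 1) * y) := by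
      field_simp
      ring
    rw [← sub_nonneg, e, mul_nonneg_iff_of_pos_left (by positivity), sub_nonneg]
  · have e : (4 * n ^ 2 + n - 1 - (4 * n ^ 2 - n - 1)) * y -
          n * (4 * n + 3) * (x - (4 * n ^ 2 - n - 1)) =
        n * (2 * y - (4 * n + 3) * (x - (4 * n ^ 2 - n - 1))) := by
      ring
    rw [← sub_nonneg, e, mul_nonneg_iff_of_pos_left (by positivity), sub_nonneg]

theorem lattice_row_iff (hn : 1 ≤ n) (x y : ℤ) :
    (0 ≤ y ∧ (4 * n - 1) * y ≤ (4 * n + 1) * x + 1 ∧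
        (4 * n + 3) * (x - (4 * n ^ 2 - n - 1)) ≤ 2 * y) ↔
      y ∈ Icc 0 ((n : ℤ) * (4 * n + 3)) ∧ y - (2 * y + 1) / (4 * n + 1) ≤ x ∧
        x ≤ 4 * n ^ 2 - n - 1 + 2 * y / (4 * n + 3) := by
  have ha : (0 : ℤ) < 4 * n + 1 := by positivity
  have hb : (0 : ℤ) < 4 * n + 3 := by positivity
  have hleft : (4 * n - 1) * y ≤ (4 * n + 1) * x + 1 ↔ y - (2 * y + 1) / (4 * n + 1) ≤ x := by
    rw [sub_le_comm, Int.le_ediv_iff_mul_le ha]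
    constructor <;> intro h <;> linarith
  have hright : (4 * n + 3) * (x - (4 * n ^ 2 - n - 1)) ≤ 2 * y ↔
      x ≤ 4 * n ^ 2 - n - 1 + 2 * y / (4 * n + 3) := by
    rw [← sub_le_iff_le_add', Int.le_ediv_iff_mul_le hb, mul_comm]
  rw [hleft, hright, mem_Icc]
  constructor
  · rintro ⟨hy, hl, hr⟩
    refine ⟨⟨hy, ?_⟩, hl, hr⟩
    rw [← hleft] at hl
    rw [← hright] at hr
    have hn' : (1 : ℤ) ≤ n := by exact_mod_cast hn
    have key : (16 * n ^ 2 - 5) * (y - n * (4 * n + 3)) ≤ 0 := by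
      linear_combination (4 * (n : ℤ) + 3) * hl + (4 * (n : ℤ) + 1) * hr
    linarith [nonpos_of_mul_nonpos_right key (by nlinarith)]
  · rintro ⟨⟨hy, -⟩, hl, hr⟩
    exact ⟨hy, hl, hr⟩

theorem lattice_row_start_le (hn : 1 ≤ n) {y : ℤ} (hy : y ≤ n * (4 * n + 3)) :
    y - (2 * y + 1) / (4 * n + 1) ≤ 4 * n ^ 2 - n - 1 + 2 * y / (4 * n + 3) + 1 := by
  have ha : (0 : ℤ) < 4 * n + 1 := by positivity
  have hb : (0 : ℤ) < 4 * n + 3 := by positivity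
  have h₁ := Int.lt_ediv_add_one_mul_self (2 * y + 1) ha
  have h₂ := Int.lt_ediv_add_one_mul_self (2 * y) hb
  have hn' : (1 : ℤ) ≤ n := by exact_mod_cast hn
  by_contra! h
  have h' : 4 * n ^ 2 - n - 1 + 2 * y / (4 * n + 3) + (2 * y + 1) / (4 * n + 1) + 2 ≤ y := by
    linarith
  have key : 0 < (16 * n ^ 2 - 5) * (y - n * (4 * n + 3)) := by
    nlinarith [mul_le_mul_of_nonneg_left h' (mul_pos ha hb).le]
  exact key.not_ge (mul_nonpos_of_nonneg_of_nonpos (by nlinarith) (by linarith))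

theorem sum_range_two_mul_div :
    ∑ y ∈ range (n * (4 * n + 3) + 1), 2 * y / (4 * n + 3) =
      n * (2 * n + 1) + (4 * n + 3) * (∑ j ∈ range n, j) * 2 + 2 * n := by
  have h := sum_range_mul_two_mul_add_div n (2 * n + 1) (c := 0) (by omega)
  simp only [add_zero, show 2 * (2 * n + 1) + 1 = 4 * n + 3 by ring] at h
  rw [sum_range_succ, h, ← mul_assoc, mul_comm n, Nat.mul_div_cancel _ (by omega)]

theorem sum_range_two_mul_add_one_div :
    ∑ y ∈ range (n * (4 * n + 3) + 1), (2 * y + 1) / (4 * n + 1) =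
      n * (2 * n + 1) + (4 * n + 1) * (∑ j ∈ range n, j) * 2 + (2 * n + 1) * (2 * n) + 1 := by
  have h := sum_range_mul_two_mul_add_div n (2 * n) (c := 1) le_rfl
  simp only [show 2 * (2 * n) + 1 = 4 * n + 1 by ring] at h
  have htail : ∀ r, (2 * (n * (4 * n + 1) + r) + 1) / (4 * n + 1) =
      (2 * r + 1) / (4 * n + 1) + 2 * n := by
    intro r
    rw [show 2 * (n * (4 * n + 1) + r) + 1 = 2 * r + 1 + 2 * n * (4 * n + 1) by ring,
      Nat.add_mul_div_right _ _ (by omega)]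
  rw [show n * (4 * n + 3) + 1 = n * (4 * n + 1) + (2 * n + 1) by ring, sum_range_add, h]
  simp only [htail, sum_add_distrib, sum_const, card_range, smul_eq_mul]
  rw [sum_range_succ, sum_eq_zero fun r hr => Nat.div_eq_of_lt (by simp at hr; omega),
    show 2 * (2 * n) + 1 = 4 * n + 1 by ring, Nat.div_self (by omega)]
  ring

theorem two_mul_sum_lattice_row_length (hn : 1 ≤ n) :
    2 * ∑ y ∈ Icc (0 : ℤ) (n * (4 * n + 3)),
        (4 * n ^ 2 - n - 1 + 2 * y / (4 * n + 3) + 1 - (y - (2 * y + 1) / (4 * n + 1))) =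
      (4 * n ^ 2 + n - 1 : ℤ) * (4 * n ^ 2 + n - 1 + 1) + 2 := by
  have hF₁ := congrArg (Nat.cast : ℕ → ℤ) (sum_range_two_mul_add_one_div n)
  have hF₂ := congrArg (Nat.cast : ℕ → ℤ) (sum_range_two_mul_div n)
  have hG := congrArg (Nat.cast : ℕ → ℤ) (sum_range_id_mul_two n)
  have hY := congrArg (Nat.cast : ℕ → ℤ) (sum_range_id_mul_two (n * (4 * n + 3) + 1))
  rw [add_tsub_cancel_right] at hY
  push_cast [Nat.cast_sub hn] at hF₁ hF₂ hG hY
  rw [show ((n : ℤ) * (4 * n + 3)) = ((n * (4 * n + 3) : ℕ) : ℤ) by push_cast; ring,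
    sum_Icc_zero_eq_sum_range]
  simp only [sum_add_distrib, sum_sub_distrib, sum_const, card_range, nsmul_eq_mul]
  push_cast
  linear_combination 2 * hF₁ + 2 * hF₂ - hY + (8 + 16 * (n : ℤ)) * hG

theorem two_mul_ncard_deltaTriangle (hn : 1 ≤ n) :
    2 * ({z : ℤ × ℤ | ((z.1 : ℝ), (z.2 : ℝ)) ∈ deltaTriangle n}.ncard : ℤ) =
      (4 * n ^ 2 + n - 1 : ℤ) * (4 * n ^ 2 + n - 1 + 1) + 2 := by
  rw [ncard_eq_sum_rows (Icc 0 (n * (4 * n + 3))) (fun y => y - (2 * y + 1) / (4 * n + 1))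
      (fun y => 4 * n ^ 2 - n - 1 + 2 * y / (4 * n + 3))
      (fun y hy => lattice_row_start_le n hn (mem_Icc.mp hy).2) fun x y => ?_,
    two_mul_sum_lattice_row_length n hn]
  rw [Set.mem_ofPred_eq, mem_deltaTriangle_iff n hn, ← lattice_row_iff n hn]
  norm_cast

end Triangle

theorem stmt2 (K : ℤ) (hK : 4 ≤ K) (hKeven : Even K)
    (a b : ℤ) (m : ℕ) (ha : a = 2 * K - 3) (hb : b = 2 * K - 1)
    (hm : 2 * (m : ℤ) = 2 * K ^ 2 - 7 * K + 4) :
    2 * Set.ncard {z : ℤ × ℤ |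
        ((z.1 : ℝ), (z.2 : ℝ)) ∈ convexHull ℝ
          ({(-1 / (a : ℝ), 0), ((m : ℝ) - (K : ℝ) + 2, 0),
            ((m : ℝ), ((K : ℝ) - 2) * (b : ℝ) / 2)} : Set (ℝ × ℝ))} =
      m * (m + 1) + 2 := by
  obtain ⟨n, hn, rfl⟩ : ∃ n : ℕ, 1 ≤ n ∧ K = 2 * n + 2 := by
    obtain ⟨r, rfl⟩ := hKeven
    exact ⟨(r - 1).toNat, by omega, by omega⟩
  subst ha hb
  have hmn : (m : ℤ) = 4 * n ^ 2 + n - 1 := by linarith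
  have hmR : (m : ℝ) = 4 * n ^ 2 + n - 1 := by exact_mod_cast hmn
  have hΔ : convexHull ℝ ({(-1 / ((2 * (2 * n + 2) - 3 : ℤ) : ℝ), 0),
      ((m : ℝ) - ((2 * n + 2 : ℤ) : ℝ) + 2, 0),
      ((m : ℝ), (((2 * n + 2 : ℤ) : ℝ) - 2) * ((2 * (2 * n + 2) - 1 : ℤ) : ℝ) / 2)} :
        Set (ℝ × ℝ)) = deltaTriangle n := by
    rw [deltaTriangle]
    push_cast
    rw [hmR]
    ring_nf
  rw [hΔ]
  zify
  rw [two_mul_ncard_deltaTriangle n hn, hmn]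
end

section
/- Let k be a field, let m >= 1, and let f ∈ k[x,y] be a polynomial lying in the m-th power of the ideal (x-1, y-1) of k[x,y]. If the degree of f in the variable x is strictly less than m, then (1-y) divides f. -/
/-!
Specialising `y ↦ 1` maps the ideal `(x - 1, y - 1) ^ m` into `((x - 1) ^ m) ⊆ k[x]`, so `f(x, 1)` is
a multiple of `(x - 1) ^ m` of degree `< m`, hence zero. The kernel of `y ↦ 1` is generated by
`y - 1`, because the quotient map by `(y - 1)` factors through the specialisation.
-/

open MvPolynomial

namespace MvPolynomial

variable {R : Type*} [CommRing R] {n : ℕ}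

noncomputable def evalTail (a : Fin n → R) : MvPolynomial (Fin (n + 1)) R →ₐ[R] Polynomial R :=
  (Polynomial.mapAlgHom (aeval a)).comp (finSuccEquiv R n).toAlgHom

@[simp]
theorem evalTail_X_zero (a : Fin n → R) : evalTail a (X 0) = Polynomial.X := by
  simp [evalTail, finSuccEquiv_X_zero]

@[simp]
theorem evalTail_X_succ (a : Fin n → R) (j : Fin n) :
    evalTail a (X j.succ) = Polynomial.C (a j) := by
  simp [evalTail, finSuccEquiv_X_succ]

theorem natDegree_evalTail_le (a : Fin n → R) (f : MvPolynomial (Fin (n + 1)) R) :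
    (evalTail a f).natDegree ≤ f.degreeOf 0 := by
  rw [← natDegree_finSuccEquiv]
  exact Polynomial.natDegree_map_le

theorem mem_span_X_succ_sub_C_of_evalTail_eq_zero (a : Fin n → R)
    {f : MvPolynomial (Fin (n + 1)) R} (hf : evalTail a f = 0) :
    f ∈ Ideal.span (Set.range fun j => X j.succ - C (a j)) := by
  set I := Ideal.span (Set.range fun j => X j.succ - C (a j) : Set (MvPolynomial (Fin (n + 1)) R))
  have hfactor : (Polynomial.aeval (Ideal.Quotient.mk I (X 0))).comp (evalTail a) =
      Ideal.Quotient.mkₐ R I := by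
    refine algHom_ext fun i => ?_
    cases i using Fin.cases with
    | zero => simp
    | succ j =>
      have hj : X j.succ - C (a j) ∈ I := Ideal.subset_span ⟨j, rfl⟩
      simp only [AlgHom.comp_apply, evalTail_X_succ, Polynomial.aeval_C, Ideal.Quotient.mkₐ_eq_mk,
        IsScalarTower.algebraMap_apply R (MvPolynomial (Fin (n + 1)) R), algebraMap_eq]
      exact (Ideal.Quotient.eq.2 hj).symm
  rw [← Ideal.Quotient.eq_zero_iff_mem, ← Ideal.Quotient.mkₐ_eq_mk R, ← hfactor,
    AlgHom.comp_apply, hf, map_zero]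

end MvPolynomial

theorem Ideal.pow_dvd_map_of_mem_span_pair_pow {R S : Type*} [CommSemiring R] [CommSemiring S]
    (g : R →+* S) {a b f : R} {m : ℕ} (hb : g b = 0) (hf : f ∈ Ideal.span {a, b} ^ m) :
    g a ^ m ∣ g f := by
  have h := Ideal.mem_map_of_mem g hf
  rwa [Ideal.map_pow, Ideal.map_span, Set.image_pair, hb, Ideal.span_pair_zero,
    Ideal.span_singleton_pow, Ideal.mem_span_singleton] at h

theorem stmt4_general (k : Type*) [Field k] (m : ℕ)
    (f : MvPolynomial (Fin 2) k)
    (hf : f ∈ (Ideal.span {X 0 - 1, X 1 - 1} : Ideal (MvPolynomial (Fin 2) k)) ^ m)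
    (hdeg : f.degreeOf 0 < m) :
    (1 - X 1 : MvPolynomial (Fin 2) k) ∣ f := by
  set ψ := evalTail (fun _ : Fin 1 => (1 : k))
  have hψX0 : ψ (X 0) = Polynomial.X := evalTail_X_zero _
  have hψX1 : ψ (X 1) = 1 := by simpa using evalTail_X_succ (fun _ : Fin 1 => (1 : k)) 0
  have hdvd : (Polynomial.X - 1) ^ m ∣ ψ f := by
    simpa [hψX0] using Ideal.pow_dvd_map_of_mem_span_pair_pow ψ.toRingHom (by simp [hψX1]) hf
  have hψf : ψ f = 0 := by
    refine Polynomial.eq_zero_of_dvd_of_natDegree_lt hdvd ?_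
    rw [Polynomial.natDegree_pow, ← map_one Polynomial.C, Polynomial.natDegree_X_sub_C, mul_one]
    exact (natDegree_evalTail_le _ f).trans_lt hdeg
  have hmem := mem_span_X_succ_sub_C_of_evalTail_eq_zero _ hψf
  rw [Set.range_unique, Ideal.mem_span_singleton] at hmem
  rw [← neg_sub, neg_dvd]
  simpa using hmem

theorem stmt4 (k : Type*) [Field k] (m : ℕ) (hm : 1 ≤ m)
    (f : MvPolynomial (Fin 2) k)
    (hf : f ∈ (Ideal.span {X 0 - 1, X 1 - 1} : Ideal (MvPolynomial (Fin 2) k)) ^ m)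
    (hdeg : f.degreeOf 0 < m) :
    (1 - X 1 : MvPolynomial (Fin 2) k) ∣ f :=
  stmt4_general k m f hf hdeg
end

section
/- Let k be an algebraically closed field of characteristic zero. Let K >= 5 be an odd integer, set a = 2K-3, c = 4K^2-16K+11, d = 2K-5, m = ceil(K^2 - (7/2)K + 2), and let Delta_K be the triangle with vertices (0,0), (m-K+2, 0), ((K-1)/2 + 1/c)*(d,a). If f ∈ k[x,y] is a nonzero polynomial supported in Delta_K that vanishes to order at least m at e = (1,1), then (1-y) does not divide f. -/
/-!
Write `K = 2n + 5`. The lattice points of `Δ_K` lie in the columns `x = i ≤ m`, and column `m`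
contains only the point `(m, h) = (n + 2)(d, a)`. Setting `y = 1` in a multiple of `1 - y` kills it,
so the coefficients in each column of its support sum to zero; hence `(m, h)` is not in the
support of `f`. Column `i < m` has `⌊a i / d⌋ + 1` points for `i ≤ b = m - K + 2` and
`⌈a (m - i) / 2⌉` points for `b < i < m`. As `d / a + 2 / a = 1`, these are complementary Beatty
sequences, so the columns `i < m` have pairwise distinct sizes, all at most `m`.

Vanishing to order `m` at `(1, 1)` implies `∑ₑ coeff_e(f) G(e) = 0` for every polynomial `G`
of degree `< m`: this sum is the value at `(1, 1)` of `G(x ∂ₓ, y ∂_y) f`. Let `P` be a support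
point of `f` in a column of least size `s`, topmost in that column. Take for `G` the product of
the vertical lines through the support columns larger than `P`'s (at most `m - s` of them) and
the horizontal lines through the points of `P`'s column below `P` (at most `s - 1`). Then `G`
vanishes on the support of `f` except at `P`, so the coefficient of `f` at `P` is zero.
-/

open MvPolynomial Finset

theorem Derivation.apply_mem_pow_of_mem_pow_succ {R A : Type*} [CommSemiring R] [CommRing A]
    [Algebra R A] (D : Derivation R A A) (I : Ideal A) :
    ∀ (n : ℕ) {x : A}, x ∈ I ^ (n + 1) → D x ∈ I ^ n
  | 0, _, _ => by simp
  | n + 1, x, hx => by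
    rw [pow_succ] at hx
    refine Submodule.mul_induction_on hx (fun y hy z hz => ?_) fun y z hy hz => ?_
    · rw [D.leibniz, smul_eq_mul, smul_eq_mul]
      refine add_mem (Ideal.mul_mem_right _ _ hy) ?_
      rw [pow_succ']
      exact Ideal.mul_mem_mul hz (D.apply_mem_pow_of_mem_pow_succ I n hy)
    · rw [map_add]
      exact add_mem hy hz

theorem Finsupp.ext_fin_two {M : Type*} [Zero M] {e e' : Fin 2 →₀ M} (h0 : e 0 = e' 0)
    (h1 : e 1 = e' 1) : e = e' :=
  Finsupp.ext fun i => by fin_cases i <;> assumption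

theorem Finset.card_filter_lt_le_of_injOn {ι : Type*} {T : Finset ι} {g : ι → ℕ} {m : ℕ}
    (hinj : Set.InjOn g T) (hg : ∀ i ∈ T, g i ≤ m) (s : ℕ) :
    #(T.filter fun i => s < g i) ≤ m - s :=
  calc #(T.filter fun i => s < g i) ≤ #(Ioc s m) :=
        card_le_card_of_injOn g
          (fun i hi => by
            obtain ⟨hi, hs⟩ := mem_filter.1 hi
            exact mem_Ioc.2 ⟨hs, hg i hi⟩)
          (hinj.mono fun _ hi => (mem_filter.1 hi).1)
    _ = m - s := Nat.card_Ioc s m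

theorem mul_fst_add_mul_snd_le_of_mem_convexHull {s : Set (ℝ × ℝ)} {α β t : ℝ}
    (h : ∀ v ∈ s, α * v.1 + β * v.2 ≤ t) {v : ℝ × ℝ} (hv : v ∈ convexHull ℝ s) :
    α * v.1 + β * v.2 ≤ t :=
  convexHull_min h (convex_halfSpace_le ⟨fun _ _ => by simp; ring, fun _ _ => by simp; ring⟩ t) hv

/-- `⌊α i⌋ + 1` and `⌈β u⌉` for `α = (d + 2) / d`, `β = (d + 2) / 2` are complementary Beatty
sequences (`1 / α + 1 / β = 1`); in particular they never meet. -/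
theorem Nat.mul_div_add_one_ne_mul_add_one_div_two {d : ℕ} (hd : 0 < d) (i u : ℕ) :
    (d + 2) * i / d + 1 ≠ ((d + 2) * u + 1) / 2 := by
  intro h
  have hq := Nat.div_add_mod ((d + 2) * i) d
  have hr := Nat.mod_lt ((d + 2) * i) hd
  set q := (d + 2) * i / d
  set r := (d + 2) * i % d
  have hu1 : 2 * q + 1 ≤ (d + 2) * u := by omega
  have hu2 : (d + 2) * u ≤ 2 * q + 2 := by omega
  rcases le_or_gt (q + 1) (u + i) with h' | h'
  · nlinarith [Nat.mul_le_mul_left d h']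
  · nlinarith [Nat.mul_le_mul_left d (show u + i ≤ q by omega)]

theorem Nat.strictMono_mul_add_div {a d : ℕ} (r : ℕ) (hd : 0 < d) (had : d ≤ a) :
    StrictMono fun i => (a * i + r) / d :=
  strictMono_nat_of_lt_succ fun i =>
    calc (a * i + r) / d < (a * i + r) / d + 1 := lt_add_one _
      _ = (a * i + r + d) / d := (Nat.add_div_right _ hd).symm
      _ ≤ (a * (i + 1) + r) / d := Nat.div_le_div_right (by rw [mul_add, mul_one]; omega)

namespace MvPolynomial

variable {σ R : Type*} [CommRing R]

theorem coeff_X_mul_pderiv (i : σ) (f : MvPolynomial σ R) (e : σ →₀ ℕ) :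
    coeff e (X i * pderiv i f) = e i * coeff e f := by
  classical
  induction f using MvPolynomial.induction_on' with
  | monomial s r =>
    rw [X_mul_pderiv_monomial, coeff_smul, coeff_monomial]
    split_ifs with h
    · subst h
      simp [nsmul_eq_mul]
    · simp
  | add p q hp hq => simp only [mul_add, map_add, coeff_add, hp, hq]

/-- `exponentPairing f G = ∑ₑ coeff_e(f) G(e)` is the value at `1` of `G(X₁ ∂₁, …, Xₙ ∂ₙ) f`. -/
noncomputable def exponentPairing (f : MvPolynomial σ R) : MvPolynomial σ R →ₗ[R] R :=
  ∑ e ∈ f.support, coeff e f • (aeval fun i => (e i : R)).toLinearMap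

theorem exponentPairing_apply (f G : MvPolynomial σ R) :
    exponentPairing f G = ∑ e ∈ f.support, coeff e f * eval (fun i => (e i : R)) G := by
  simp [exponentPairing]

theorem exponentPairing_C (f : MvPolynomial σ R) (r : R) :
    exponentPairing f (C r) = r * eval 1 f := by
  simp only [exponentPairing_apply, eval_C, eval_eq 1 f, Pi.one_apply, one_pow, prod_const_one,
    mul_one, sum_mul, mul_comm r]

theorem exponentPairing_X_mul (f G : MvPolynomial σ R) (i : σ) :
    exponentPairing f (X i * G) = exponentPairing (X i * pderiv i f) G := by
  have hsub : (X i * pderiv i f).support ⊆ f.support := fun e he => by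
    rw [mem_support_iff] at he ⊢
    rw [coeff_X_mul_pderiv] at he
    exact right_ne_zero_of_mul he
  rw [exponentPairing_apply, exponentPairing_apply, sum_subset hsub]
  · refine sum_congr rfl fun e _ => ?_
    rw [coeff_X_mul_pderiv, eval_mul, eval_X]
    ring
  · intro e _ he
    rw [notMem_support_iff.1 he, zero_mul]

theorem exponentPairing_monomial_eq_zero {n : ℕ} {f : MvPolynomial σ R}
    (hf : f ∈ RingHom.ker (eval (1 : σ → R)) ^ n) {p : σ →₀ ℕ} (hp : p.degree < n) (r : R) :
    exponentPairing f (monomial p r) = 0 := by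
  induction n generalizing f p with
  | zero => exact absurd hp (Nat.not_lt_zero _)
  | succ n ih =>
    obtain rfl | hp0 := eq_or_ne p 0
    · rw [← C_apply, exponentPairing_C,
        RingHom.mem_ker.1 (Ideal.pow_le_self n.succ_ne_zero hf), mul_zero]
    obtain ⟨i, hi⟩ := Finsupp.ne_iff.1 hp0
    rw [← Finsupp.sub_add_single_one_cancel hi, map_add, Finsupp.degree_single] at hp
    rw [← Finsupp.sub_add_single_one_cancel hi, monomial_add_single, pow_one, mul_comm,
      exponentPairing_X_mul]
    have hf' : X i * pderiv i f ∈ RingHom.ker (eval (1 : σ → R)) ^ n :=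
      Ideal.mul_mem_left _ (X i) ((pderiv i).apply_mem_pow_of_mem_pow_succ _ n hf)
    exact ih hf' (by omega)

theorem exponentPairing_eq_zero_of_mem_pow {n : ℕ} {f : MvPolynomial σ R}
    (hf : f ∈ RingHom.ker (eval (1 : σ → R)) ^ n) {G : MvPolynomial σ R}
    (hG : G.totalDegree < n) : exponentPairing f G = 0 := by
  rw [G.as_sum, map_sum]
  exact sum_eq_zero fun p hp =>
    exponentPairing_monomial_eq_zero hf ((le_totalDegree hp).trans_lt hG) _

theorem totalDegree_prod_X_sub_C_le {ι : Type*} (i : σ) (s : Finset ι) (g : ι → R) :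
    (∏ c ∈ s, (X i - C (g c))).totalDegree ≤ #s := by
  refine (totalDegree_finsetProd _ _).trans ?_
  rw [card_eq_sum_ones]
  exact sum_le_sum fun c _ =>
    (totalDegree_sub_C_le _ _).trans ((totalDegree_monomial_le _ _).trans (by simp))

noncomputable def gridLines (A B : Finset ℕ) : MvPolynomial (Fin 2) R :=
  (∏ i ∈ A, (X 0 - C (i : R))) * ∏ j ∈ B, (X 1 - C (j : R))

theorem totalDegree_gridLines_le (A B : Finset ℕ) :
    (gridLines A B : MvPolynomial (Fin 2) R).totalDegree ≤ #A + #B :=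
  (totalDegree_mul _ _).trans
    (add_le_add (totalDegree_prod_X_sub_C_le _ _ _) (totalDegree_prod_X_sub_C_le _ _ _))

theorem eval_gridLines_eq_zero_iff [IsDomain R] [CharZero R] (A B : Finset ℕ)
    (e : Fin 2 →₀ ℕ) :
    eval (fun i => (e i : R)) (gridLines A B) = 0 ↔ e 0 ∈ A ∨ e 1 ∈ B := by
  simp [gridLines, prod_eq_zero_iff, sub_eq_zero]

theorem eq_zero_of_mem_pow_of_injOn_card [IsDomain R] [CharZero R] {m : ℕ}
    {f : MvPolynomial (Fin 2) R} (hf : f ∈ RingHom.ker (eval (1 : Fin 2 → R)) ^ m)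
    (col : ℕ → Finset ℕ) (S : Set ℕ) (hsupp : ∀ e ∈ f.support, e 0 ∈ S ∧ e 1 ∈ col (e 0))
    (hinj : Set.InjOn (fun i => #(col i)) S) (hcard : ∀ i ∈ S, #(col i) ≤ m) : f = 0 := by
  by_contra hf0
  obtain ⟨P, hP, hPmax⟩ := f.support.exists_max_image
    (fun e => toLex (m - #(col (e 0)), e 1)) (support_nonempty.2 hf0)
  obtain ⟨hPS, hPcol⟩ := hsupp P hP
  set s := #(col (P 0))
  have hcolS : ∀ i ∈ f.support.image (· 0), i ∈ S := by
    simp only [mem_image]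
    rintro _ ⟨e, he, rfl⟩
    exact (hsupp e he).1
  set larger := (f.support.image (· 0)).filter (fun i => s < #(col i))
  set below := (col (P 0)).filter (· < P 1)
  have hlarger : #larger ≤ m - s := card_filter_lt_le_of_injOn
    (hinj.mono fun i hi => hcolS i hi) (fun i hi => hcard i (hcolS i hi)) s
  have hbelow : #below < s := card_lt_card (filter_ssubset.2 ⟨P 1, hPcol, lt_irrefl _⟩)
  have hdeg : (gridLines larger below : MvPolynomial (Fin 2) R).totalDegree < m := by
    have := hcard _ hPS
    have := totalDegree_gridLines_le (R := R) larger below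
    omega
  have hzero : ∀ e ∈ f.support, e ≠ P → e 0 ∈ larger ∨ e 1 ∈ below := by
    intro e he hne
    by_contra! hout
    have hle : #(col (e 0)) ≤ s := by
      simpa [larger, mem_image.2 ⟨e, he, rfl⟩] using hout.1
    have hmax := Prod.Lex.toLex_le_toLex.1 (hPmax e he)
    have hsize : #(col (e 0)) = s := by have := hcard _ hPS; omega
    have hcol : e 0 = P 0 := hinj (hsupp e he).1 hPS hsize
    have h1 : e 1 < P 1 :=
      lt_of_le_of_ne (by omega) fun h1 => hne (Finsupp.ext_fin_two hcol h1)
    exact hout.2 (mem_filter.2 ⟨hcol ▸ (hsupp e he).2, h1⟩)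
  have hPval : eval (fun i => (P i : R)) (gridLines larger below) ≠ 0 := by
    rw [Ne, eval_gridLines_eq_zero_iff, mem_filter, mem_filter]
    exact fun h => h.elim (fun h => lt_irrefl s h.2) fun h => lt_irrefl _ h.2
  have := exponentPairing_eq_zero_of_mem_pow hf hdeg
  rw [exponentPairing_apply, sum_eq_single_of_mem P hP fun e he hne => by
    rw [(eval_gridLines_eq_zero_iff _ _ e).2 (hzero e he hne), mul_zero]] at this
  exact mem_support_iff.1 hP ((mul_eq_zero.1 this).resolve_right hPval)

theorem exists_ne_of_one_sub_X_dvd {f : MvPolynomial (Fin 2) R} (hdiv : (1 - X 1) ∣ f)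
    {e : Fin 2 →₀ ℕ} (he : e ∈ f.support) : ∃ e' ∈ f.support, e' 0 = e 0 ∧ e' ≠ e := by
  by_contra! honly
  set φ : MvPolynomial (Fin 2) R →ₐ[R] Polynomial R := aeval ![Polynomial.X, 1]
  have hφ : φ f = 0 := by
    obtain ⟨g, rfl⟩ := hdiv
    simp [φ]
  have hmon (d : Fin 2 →₀ ℕ) (r : R) :
      φ (monomial d r) = Polynomial.C r * Polynomial.X ^ d 0 := by
    rw [aeval_monomial, Finsupp.prod_fintype _ _ (by simp), Fin.prod_univ_two]
    simp
  have hcoeff : (φ f).coeff (e 0) = coeff e f := by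
    rw [f.as_sum, map_sum, Polynomial.finsetSum_coeff, sum_eq_single_of_mem e he]
    · simp [hmon]
    · intro d hd hne
      rw [hmon, Polynomial.coeff_C_mul_X_pow, if_neg fun h => hne (honly d hd h.symm)]
  exact mem_support_iff.1 he (hcoeff ▸ hφ ▸ Polynomial.coeff_zero _)

end MvPolynomial

/-! `K = 2n + 5`; `a`, `c`, `d`, `m` are those of the statement, `b = m - K + 2`, and
`(m, h) = (n + 2) • (d, a)`. -/
namespace DeltaK

def a (n : ℕ) : ℕ := 4 * n + 7
def d (n : ℕ) : ℕ := 4 * n + 5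
def c (n : ℕ) : ℕ := 16 * n ^ 2 + 48 * n + 31
def m (n : ℕ) : ℕ := 4 * n ^ 2 + 13 * n + 10
def b (n : ℕ) : ℕ := 4 * n ^ 2 + 11 * n + 7
def h (n : ℕ) : ℕ := 4 * n ^ 2 + 15 * n + 14

/-- The lattice points `(i, j)` of `Δ_K`: on or below the edge `d y = a x` and on or above the
edge `(a + 2) (x - b) = 2 y`. -/
def column (n i : ℕ) : Finset ℕ := Icc (((a n + 2) * (i - b n) + 1) / 2) (a n * i / d n)

variable {n i j u : ℕ}

theorem d_pos : 0 < d n := by simp [d]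

theorem a_eq : a n = d n + 2 := by simp only [a, d]

theorem m_eq : m n = b n + (2 * n + 3) := by simp only [m, b]; ring

theorem mem_column :
    j ∈ column n i ↔ d n * j ≤ a n * i ∧ (a n + 2) * i ≤ (a n + 2) * b n + 2 * j := by
  rw [column, mem_Icc, Nat.le_div_iff_mul_le d_pos, Nat.mul_sub, mul_comm j]
  omega

theorem mem_column_of_mem_convexHull {x y : ℕ} (hxy : ((x : ℝ), (y : ℝ)) ∈ convexHull ℝ
    {(0, 0), ((b n : ℝ), 0), ((n + 2 + 1 / (c n : ℝ)) • ((d n : ℝ), (a n : ℝ)))}) :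
    y ∈ column n x := by
  have hc : (c n : ℝ) ≠ 0 := Nat.cast_ne_zero.2 (by simp [c])
  rw [mem_column]
  constructor
  · have := mul_fst_add_mul_snd_le_of_mem_convexHull (α := -(a n : ℝ)) (β := d n) (t := 0) ?_ hxy
    · exact_mod_cast (by linarith : (d n : ℝ) * y ≤ a n * x)
    · simp only [Set.mem_insert_iff, Set.mem_singleton_iff, forall_eq_or_imp, forall_eq]
      refine ⟨by simp, by simp; positivity, le_of_eq ?_⟩
      simp only [Prod.smul_mk, smul_eq_mul]
      ring
  · have := mul_fst_add_mul_snd_le_of_mem_convexHull (α := (a n : ℝ) + 2) (β := -2)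
      (t := (a n + 2) * b n) ?_ hxy
    · exact_mod_cast (by linarith : ((a n : ℝ) + 2) * x ≤ (a n + 2) * b n + 2 * y)
    · simp only [Set.mem_insert_iff, Set.mem_singleton_iff, forall_eq_or_imp, forall_eq]
      refine ⟨by simp; positivity, by simp, le_of_eq ?_⟩
      simp only [Prod.smul_mk, smul_eq_mul]
      field_simp
      simp only [a, b, c, d]
      push_cast
      ring

theorem le_m_of_mem_column (hj : j ∈ column n i) : i ≤ m n := by
  obtain ⟨h1, h2⟩ := mem_column.1 hj
  simp only [a, b, d, m] at *
  nlinarith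

theorem eq_h_of_mem_column_m (hj : j ∈ column n (m n)) : j = h n := by
  obtain ⟨h1, h2⟩ := mem_column.1 hj
  simp only [a, b, d, m, h] at *
  apply le_antisymm <;> nlinarith

theorem card_column_of_le (hi : i ≤ b n) : #(column n i) = a n * i / d n + 1 := by
  rw [column, Nat.card_Icc, Nat.sub_eq_zero_of_le hi]
  simp

theorem card_column_m_sub (hu : 0 < u) (hu' : u ≤ 2 * n + 2) :
    #(column n (m n - u)) = (a n * u + 1) / 2 := by
  obtain ⟨i, hi⟩ : ∃ i, m n = i + u := ⟨m n - u, by simp only [m]; omega⟩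
  obtain ⟨w, hw⟩ : ∃ w, h n = w + u + 1 := ⟨h n - u - 1, by simp only [h]; omega⟩
  have hi' : (i : ℤ) = m n - u := by omega
  have hw' : (w : ℤ) = h n - u - 1 := by omega
  have hhi : a n * i / d n = w := by
    apply Nat.div_eq_of_lt_le <;> zify <;> rw [hi', hw'] <;> simp only [a, d, m, h] <;> push_cast
      <;> nlinarith
  have hlo : (a n + 2) * (i - b n) + 1 + a n * u = 2 * (w + 1) := by
    have hib : b n ≤ i := by simp only [b, m] at hi ⊢; omega
    zify [hib]
    rw [hi', hw']
    simp only [a, b, m, h]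
    push_cast
    ring
  rw [column, Nat.card_Icc, show m n - u = i by omega, hhi]
  omega

theorem card_column_of_lt (hbi : b n < i) (him : i < m n) :
    #(column n i) = (a n * (m n - i) + 1) / 2 := by
  have := m_eq (n := n)
  rw [← card_column_m_sub (by omega) (by omega), Nat.sub_sub_self him.le]

theorem card_column_le (hi : i < m n) : #(column n i) ≤ m n := by
  rcases le_or_gt i (b n) with hib | hib
  · rw [card_column_of_le hib, Nat.add_one_le_iff, Nat.div_lt_iff_lt_mul d_pos]
    calc a n * i ≤ a n * b n := Nat.mul_le_mul_left _ hib
      _ < m n * d n := by simp only [a, b, d, m]; nlinarith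
  · rw [card_column_of_lt hib hi]
    have hmi : a n * (m n - i) ≤ a n * (2 * n + 2) :=
      Nat.mul_le_mul_left _ (by rw [m_eq] at hi ⊢; omega)
    have hab : a n * (2 * n + 2) = 2 * b n := by simp only [a, b]; ring
    have := m_eq (n := n)
    omega

theorem injOn_card_column : Set.InjOn (fun i => #(column n i)) (Set.Iio (m n)) := by
  intro i hi i' hi' heq
  simp only [Set.mem_Iio] at hi hi' heq
  have hda : d n ≤ a n := by rw [a_eq]; omega
  rcases le_or_gt i (b n) with hib | hib <;> rcases le_or_gt i' (b n) with hib' | hib'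
  · rw [card_column_of_le hib, card_column_of_le hib'] at heq
    exact (Nat.strictMono_mul_add_div 0 d_pos hda).injective (by simpa using heq)
  · rw [card_column_of_le hib, card_column_of_lt hib' hi', a_eq] at heq
    exact absurd heq (Nat.mul_div_add_one_ne_mul_add_one_div_two d_pos _ _)
  · rw [card_column_of_lt hib hi, card_column_of_le hib', a_eq] at heq
    exact absurd heq.symm (Nat.mul_div_add_one_ne_mul_add_one_div_two d_pos _ _)
  · rw [card_column_of_lt hib hi, card_column_of_lt hib' hi'] at heq
    have := (Nat.strictMono_mul_add_div 1 two_pos (by simp [a] : 2 ≤ a n)).injective heq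
    omega

end DeltaK

theorem stmt6_general (k : Type*) [Field k] [CharZero k]
    (K : ℤ) (hK : 5 ≤ K) (hKodd : Odd K)
    (a c d : ℤ) (m : ℕ) (ha : a = 2 * K - 3) (hc : c = 4 * K ^ 2 - 16 * K + 11)
    (hd : d = 2 * K - 5)
    (hm : 2 * (m : ℤ) = 2 * K ^ 2 - 7 * K + 5)
    (f : MvPolynomial (Fin 2) k) (hf0 : f ≠ 0)
    (hsupp : ∀ e ∈ f.support,
      ((e 0 : ℝ), (e 1 : ℝ)) ∈ convexHull ℝ
        ({((0 : ℝ), (0 : ℝ)), ((m : ℝ) - (K : ℝ) + 2, 0),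
          (((K : ℝ) - 1) / 2 + 1 / (c : ℝ)) • ((d : ℝ), (a : ℝ))} : Set (ℝ × ℝ)))
    (hvan : f ∈ (Ideal.span {X 0 - 1, X 1 - 1} : Ideal (MvPolynomial (Fin 2) k)) ^ m) :
    ¬ ((1 - X 1 : MvPolynomial (Fin 2) k) ∣ f) := by
  intro hdiv
  obtain ⟨n, rfl⟩ : ∃ n : ℕ, K = 2 * n + 5 := by
    obtain ⟨l, rfl⟩ := hKodd
    exact ⟨(l - 2).toNat, by omega⟩
  obtain rfl : m = DeltaK.m n := by
    have : (m : ℤ) = DeltaK.m n := by simp only [DeltaK.m]; push_cast; linarith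
    exact_mod_cast this
  subst ha hc hd
  have hcol (e) (he : e ∈ f.support) : e 1 ∈ DeltaK.column n (e 0) :=
    DeltaK.mem_column_of_mem_convexHull (by
      convert hsupp e he using 7 <;>
        push_cast [DeltaK.a, DeltaK.b, DeltaK.c, DeltaK.d, DeltaK.m] <;> ring)
  have hlt (e) (he : e ∈ f.support) : e 0 < DeltaK.m n := by
    refine (DeltaK.le_m_of_mem_column (hcol e he)).lt_of_ne fun he0 => ?_
    obtain ⟨e', he', he'0, hne⟩ := exists_ne_of_one_sub_X_dvd hdiv he
    have hapex := DeltaK.eq_h_of_mem_column_m (he0 ▸ hcol e he)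
    have hapex' := DeltaK.eq_h_of_mem_column_m ((he'0.trans he0) ▸ hcol e' he')
    exact hne (Finsupp.ext_fin_two he'0 (hapex'.trans hapex.symm))
  have hvan' : f ∈ RingHom.ker (eval (1 : Fin 2 → k)) ^ DeltaK.m n :=
    Ideal.pow_right_mono (Ideal.span_le.2 (by simp [Set.insert_subset_iff])) _ hvan
  exact hf0 (eq_zero_of_mem_pow_of_injOn_card hvan' (DeltaK.column n) (Set.Iio (DeltaK.m n))
    (fun e he => ⟨hlt e he, hcol e he⟩) DeltaK.injOn_card_column
    fun _ hi => DeltaK.card_column_le hi)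

theorem stmt6 (k : Type*) [Field k] [IsAlgClosed k] [CharZero k]
    (K : ℤ) (hK : 5 ≤ K) (hKodd : Odd K)
    (a c d : ℤ) (m : ℕ) (ha : a = 2 * K - 3) (hc : c = 4 * K ^ 2 - 16 * K + 11)
    (hd : d = 2 * K - 5)
    (hm : 2 * (m : ℤ) = 2 * K ^ 2 - 7 * K + 5)
    (f : MvPolynomial (Fin 2) k) (hf0 : f ≠ 0)
    (hsupp : ∀ e ∈ f.support,
      ((e 0 : ℝ), (e 1 : ℝ)) ∈ convexHull ℝ
        ({((0 : ℝ), (0 : ℝ)), ((m : ℝ) - (K : ℝ) + 2, 0),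
          (((K : ℝ) - 1) / 2 + 1 / (c : ℝ)) • ((d : ℝ), (a : ℝ))} : Set (ℝ × ℝ)))
    (hvan : f ∈ (Ideal.span {X 0 - 1, X 1 - 1} : Ideal (MvPolynomial (Fin 2) k)) ^ m) :
    ¬ ((1 - X 1 : MvPolynomial (Fin 2) k) ∣ f) :=
  stmt6_general k K hK hKodd a c d m ha hc hd hm f hf0 hsupp hvan
end

section
/- Fix an integer K >= 4 and define the integer sequence F by F(0) = 0, F(1) = 1, F(n+2) = (K-2)F(n+1) - F(n). Then integers M > N >= 0 satisfy (M+N)^2 = K*M*N + 1 if and only if there exists n >= 0 with M = F(n+1) and N = F(n). -/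
theorem stmt10 (K : ℤ) (hK : 4 ≤ K) (F : ℕ → ℤ)
    (hF0 : F 0 = 0) (hF1 : F 1 = 1)
    (hFrec : ∀ n : ℕ, F (n + 2) = (K - 2) * F (n + 1) - F n)
    (M N : ℤ) (hMN : N < M) (hN : 0 ≤ N) :
    (M + N) ^ 2 = K * M * N + 1 ↔ ∃ n : ℕ, M = F (n + 1) ∧ N = F n := by
  constructor
  · -- forward: strong induction on N via a bound
    have key : ∀ k : ℕ, ∀ M N : ℤ, 0 ≤ N → N ≤ (k : ℤ) → N < M →
        (M + N) ^ 2 = K * M * N + 1 → ∃ n : ℕ, M = F (n + 1) ∧ N = F n := by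
      intro k
      induction k with
      | zero =>
        intro M N hN0 hNk hlt heq
        have hNz : N = 0 := le_antisymm (by exact_mod_cast hNk) hN0
        subst hNz
        have hM2 : M ^ 2 = 1 := by linarith [heq]
        have hM1 : M = 1 := by nlinarith
        exact ⟨0, by simp [hF1, hM1], by simp [hF0]⟩
      | succ k ih =>
        intro M N hN0 hNk hlt heq
        by_cases hle : N ≤ (k : ℤ)
        · exact ih M N hN0 hle hlt heq
        · have hN1 : 1 ≤ N := by
            push_neg at hle
            have : (0:ℤ) ≤ (k:ℤ) := by positivity
            linarith
          set M' : ℤ := (K - 2) * N - M with hM'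
          have hprod : M * M' = N ^ 2 - 1 := by
            rw [hM']; nlinarith [heq]
          have hMpos : 0 < M := by linarith
          have hM'0 : 0 ≤ M' := by nlinarith
          have hM'N : M' < N := by nlinarith
          have heq' : (N + M') ^ 2 = K * N * M' + 1 := by
            rw [hM']; nlinarith [heq]
          have hbound : M' ≤ (k : ℤ) := by
            have : M' < (k:ℤ) + 1 := lt_of_lt_of_le hM'N (by exact_mod_cast hNk)
            linarith
          obtain ⟨n, hn1, hn2⟩ := ih N M' hM'0 hbound hM'N heq'
          refine ⟨n + 1, ?_, hn1⟩
          have := hFrec n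
          rw [← hn1, ← hn2] at this
          rw [show n + 1 + 1 = n + 2 from rfl, this, hM']
          ring
    intro heq
    exact key N.toNat M N hN (by simp [Int.toNat_of_nonneg hN]) hMN heq
  · -- reverse: invariant by induction
    rintro ⟨n, hM, hN'⟩
    have inv : ∀ m : ℕ, (F (m + 1) + F m) ^ 2 = K * F (m + 1) * F m + 1 := by
      intro m
      induction m with
      | zero => simp [hF0, hF1]
      | succ m ihm =>
        have hr := hFrec m
        rw [show m + 1 + 1 = m + 2 from rfl, hr]
        nlinarith [ihm]
    rw [hM, hN']
    exact inv n
end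

section
/- Let P be a polynomial with real coefficients of degree N >= 1 whose leading coefficient and constant coefficient both have absolute value 1. Suppose that all complex roots of P have the same absolute value. Then the absolute value of the coefficient of z in P equals the absolute value of the coefficient of z^{N-1} in P. -/
/-!
Over `ℂ` the roots `z₁, …, z_N` all have modulus `r`, and `|z₁ ⋯ z_N| = |a₀ / a_N| = 1` forces
`r = 1`. By Vieta, up to the factor `± a_N` the coefficient of `z^{N-1}` is `e₁ = ∑ zᵢ` and that
of `z` is `e_{N-1} = (∏ zᵢ) ∑ zᵢ⁻¹`; on the unit circle `zᵢ⁻¹ = conj zᵢ`, so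
`|e_{N-1}| = |conj e₁| = |e₁|`.
-/

open Polynomial

namespace Multiset

variable {R : Type*} [CommSemiring R]

theorem esymm_card (s : Multiset R) : s.esymm (card s) = s.prod := by
  simp [esymm, powersetCard_self]

theorem esymm_one (s : Multiset R) : s.esymm 1 = s.sum := by
  simp [esymm, powersetCard_one, map_map]

theorem esymm_cons_succ (a : R) (s : Multiset R) (n : ℕ) :
    (a ::ₘ s).esymm (n + 1) = s.esymm (n + 1) + a * s.esymm n := by
  simp [esymm, powersetCard_cons, map_map, ← sum_map_mul_left]

theorem esymm_card_sub_one {K : Type*} [Field K] {s : Multiset K} (hs : s ≠ 0)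
    (h0 : (0 : K) ∉ s) : s.esymm (card s - 1) = s.prod * (s.map (·⁻¹)).sum := by
  induction s using Multiset.induction with
  | empty => exact absurd rfl hs
  | cons a t ih =>
    have ha : a ≠ 0 := fun h => h0 (h ▸ mem_cons_self a t)
    rcases eq_or_ne t 0 with rfl | ht
    · simp [esymm, ha]
    obtain ⟨k, hk⟩ := Nat.exists_eq_add_one.mpr (card_pos.mpr ht)
    have ih' := ih ht (fun h => h0 (mem_cons_of_mem h))
    rw [hk, Nat.add_sub_cancel] at ih'
    rw [card_cons, hk, Nat.add_sub_cancel, esymm_cons_succ, ← hk, esymm_card, ih',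
      prod_cons, map_cons, sum_cons]
    field_simp

end Multiset

theorem norm_multiset_prod {α : Type*} [NormedField α] (s : Multiset α) :
    ‖s.prod‖ = (s.map norm).prod :=
  map_multiset_prod (normHom : α →*₀ ℝ) s

theorem Complex.norm_esymm_card_sub_one {s : Multiset ℂ} (hs : s ≠ 0)
    (hnorm : ∀ z ∈ s, ‖z‖ = 1) : ‖s.esymm (Multiset.card s - 1)‖ = ‖s.sum‖ := by
  have h0 : (0 : ℂ) ∉ s := fun h => by simpa using hnorm 0 h
  have hprod : ‖s.prod‖ = 1 := by
    rw [norm_multiset_prod]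
    exact Multiset.prod_eq_one (by simpa using hnorm)
  have hinv : (s.map (·⁻¹)).sum = starRingEnd ℂ s.sum := by
    rw [map_multiset_sum]
    exact congrArg Multiset.sum
      (Multiset.map_congr rfl fun z hz => Complex.inv_eq_conj (hnorm z hz))
  rw [Multiset.esymm_card_sub_one hs h0, hinv, norm_mul, hprod, Complex.norm_conj, one_mul]

namespace Polynomial

theorem norm_eq_one_of_mem_roots {Q : ℂ[X]} (hQ : ‖Q.coeff 0‖ = ‖Q.leadingCoeff‖)
    (hroots : ∀ z ∈ Q.roots, ∀ w ∈ Q.roots, ‖z‖ = ‖w‖) {z : ℂ} (hz : z ∈ Q.roots) :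
    ‖z‖ = 1 := by
  have hsplit : Q.Splits := IsAlgClosed.splits Q
  have hlead : Q.leadingCoeff ≠ 0 := leadingCoeff_ne_zero.mpr (ne_zero_of_mem_roots hz)
  have hprod : ‖Q.roots.prod‖ = 1 := by
    rw [hsplit.coeff_zero_eq_leadingCoeff_mul_prod_roots, norm_mul, norm_mul, norm_pow, norm_neg,
      norm_one, one_pow, one_mul] at hQ
    exact (mul_eq_left₀ (norm_ne_zero_iff.mpr hlead)).mp hQ
  have hrep : Q.roots.map norm = Multiset.replicate (Multiset.card Q.roots) ‖z‖ :=
    Multiset.eq_replicate.mpr ⟨Multiset.card_map _ _, fun _ hx => by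
      obtain ⟨w, hw, rfl⟩ := Multiset.mem_map.mp hx
      exact hroots w hw z hz⟩
  rw [norm_multiset_prod, hrep, Multiset.prod_replicate] at hprod
  have hcard : Multiset.card Q.roots ≠ 0 := (Multiset.card_pos_iff_exists_mem.mpr ⟨z, hz⟩).ne'
  exact (pow_eq_one_iff_of_nonneg (norm_nonneg z) hcard).mp hprod

theorem norm_coeff_one_eq_norm_coeff_natDegree_sub_one {Q : ℂ[X]} (hdeg : 1 ≤ Q.natDegree)
    (hroots : ∀ z ∈ Q.roots, ‖z‖ = 1) : ‖Q.coeff 1‖ = ‖Q.coeff (Q.natDegree - 1)‖ := by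
  have hcard : Multiset.card Q.roots = Q.natDegree :=
    splits_iff_card_roots.mp (IsAlgClosed.splits Q)
  have hne : Q.roots ≠ 0 := Multiset.card_pos.mp (hcard ▸ hdeg)
  rw [coeff_eq_esymm_roots_of_card hcard hdeg,
    coeff_eq_esymm_roots_of_card hcard (Nat.sub_le _ _), Nat.sub_sub_self hdeg, ← hcard,
    norm_mul, norm_mul, Complex.norm_esymm_card_sub_one hne hroots, Multiset.esymm_one]
  simp

end Polynomial

theorem stmt12 (P : Polynomial ℝ) (hdeg : 1 ≤ P.natDegree)
    (hlead : |P.leadingCoeff| = 1) (hconst : |P.coeff 0| = 1)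
    (hroots : ∀ z w : ℂ, (P.map (algebraMap ℝ ℂ)).IsRoot z →
      (P.map (algebraMap ℝ ℂ)).IsRoot w → ‖z‖ = ‖w‖) :
    |P.coeff 1| = |P.coeff (P.natDegree - 1)| := by
  set Q := P.map (algebraMap ℝ ℂ)
  have hQdeg : Q.natDegree = P.natDegree := natDegree_map _
  have hnorm_coeff (k : ℕ) : ‖Q.coeff k‖ = |P.coeff k| := by simp [Q, coeff_map]
  have hnorm_lead : ‖Q.leadingCoeff‖ = |P.leadingCoeff| := by simp [Q, leadingCoeff_map]
  have hunit (z : ℂ) (hz : z ∈ Q.roots) : ‖z‖ = 1 :=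
    norm_eq_one_of_mem_roots (by rw [hnorm_coeff, hnorm_lead, hconst, hlead])
      (fun z hz w hw => hroots z w (isRoot_of_mem_roots hz) (isRoot_of_mem_roots hw)) hz
  have key := norm_coeff_one_eq_norm_coeff_natDegree_sub_one (hQdeg ▸ hdeg) hunit
  rwa [hQdeg, hnorm_coeff, hnorm_coeff] at key
end

section
/- Let K >= 1 be an integer and let a, c, delta : N -> R be sequences such that: |delta(n)| = 1 for all n; a(0) = 0 and c(0) = -1; c(n) is nonzero for all n; for all n >= 1, c(n)*c(n-1) = a(n); and for all n >= 1, delta(n)*a(n-1) + delta(n-1)*a(n) equals c(n-1)^K when n is odd and equals 0 when n is even. Then for all n >= 1, |a(2n)| = |a(2n-1)| and |a(2n)| <= n. -/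
theorem stmt13 (K : ℕ) (hK : 1 ≤ K) (a c δ : ℕ → ℝ)
    (hδ : ∀ n, |δ n| = 1) (ha0 : a 0 = 0) (hc0 : c 0 = -1)
    (hc : ∀ n, c n ≠ 0)
    (hca : ∀ n, 1 ≤ n → c n * c (n - 1) = a n)
    (hrec : ∀ n, 1 ≤ n →
      δ n * a (n - 1) + δ (n - 1) * a n = if Odd n then c (n - 1) ^ K else 0) :
    ∀ n, 1 ≤ n → |a (2 * n)| = |a (2 * n - 1)| ∧ |a (2 * n)| ≤ (n : ℝ) := by
  have heq : ∀ m, 1 ≤ m → |a (2 * m)| = |a (2 * m - 1)| := by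
    intro m hm
    have h := hrec (2 * m) (by omega)
    rw [if_neg (by rw [Nat.odd_iff]; omega)] at h
    have h2 : δ (2 * m) * a (2 * m - 1) = -(δ (2 * m - 1) * a (2 * m)) := by linarith
    have h3 := congrArg abs h2
    rw [abs_neg, abs_mul, abs_mul, hδ, hδ, one_mul, one_mul] at h3
    exact h3.symm
  have hc2 : ∀ m, |c (2 * m)| = 1 := by
    intro m
    induction m with
    | zero => simp [hc0]
    | succ k ih =>
      have e1 := heq (k + 1) (by omega)
      have e2 := hca (2 * (k + 1)) (by omega)
      have e3 := hca (2 * k + 1) (by omega)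
      have n1 : 2 * (k + 1) - 1 = 2 * k + 1 := by omega
      have n2 : 2 * k + 1 - 1 = 2 * k := by omega
      rw [n1] at e1 e2
      rw [n2] at e3
      have hcne : |c (2 * k + 1)| ≠ 0 := abs_ne_zero.mpr (hc _)
      have key : |c (2 * (k + 1))| * |c (2 * k + 1)| = 1 * |c (2 * k + 1)| := by
        rw [one_mul, ← abs_mul, e2, e1, ← e3, abs_mul, ih, mul_one]
      exact mul_right_cancel₀ hcne key
  have ha1 : |a 1| = 1 := by
    have h := hrec 1 (by omega)
    rw [if_pos (by exact ⟨0, rfl⟩)] at h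
    simp only [Nat.sub_self, ha0, mul_zero, zero_add] at h
    have h3 := congrArg abs h
    rw [abs_mul, hδ, one_mul, abs_pow, hc0] at h3
    simpa using h3
  intro n hn
  refine ⟨heq n hn, ?_⟩
  induction n, hn using Nat.le_induction with
  | base =>
    have := heq 1 (by omega)
    norm_num at this ⊢
    rw [this, ha1]
  | succ k hk ih =>
    have h := hrec (2 * k + 1) (by omega)
    rw [if_pos (Nat.odd_iff.mpr (by omega))] at h
    have n2 : 2 * k + 1 - 1 = 2 * k := by omega
    rw [n2] at h
    have hb : |a (2 * k + 1)| ≤ 1 + (k : ℝ) := by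
      have h2 : δ (2 * k) * a (2 * k + 1) = c (2 * k) ^ K - δ (2 * k + 1) * a (2 * k) := by
        linarith
      have h3 := congrArg abs h2
      rw [abs_mul, hδ, one_mul] at h3
      have h4 : |c (2 * k) ^ K - δ (2 * k + 1) * a (2 * k)| ≤
          |c (2 * k) ^ K| + |δ (2 * k + 1) * a (2 * k)| := abs_sub _ _
      rw [abs_pow, hc2, one_pow, abs_mul, hδ, one_mul] at h4
      have := ih
      linarith [h3.le.trans h4]
    have e1 := heq (k + 1) (by omega)
    have n1 : 2 * (k + 1) - 1 = 2 * k + 1 := by omega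
    rw [n1] at e1
    rw [e1]
    push_cast
    linarith
end

section
/- Let K >= 1 be an integer and let a', c', delta : N -> R be sequences such that: |delta(n)| = 1 for all n; a'(0) = -1 and c'(0) = 1; c'(n) is nonzero for all n; for all n >= 1, c'(n)*c'(n-1) = a'(n); and for all n >= 1, delta(n)*a'(n-1) + delta(n-1)*a'(n) equals c'(n-1)^K when n is even and equals 0 when n is odd. Then for all n >= 0, |a'(2n+1)| = |a'(2n)| and |a'(2n)| <= n+1. -/
theorem stmt14 (K : ℕ) (hK : 1 ≤ K) (a' c' δ : ℕ → ℝ)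
    (hδ : ∀ n, |δ n| = 1) (ha0 : a' 0 = -1) (hc0 : c' 0 = 1)
    (hc : ∀ n, c' n ≠ 0)
    (hca : ∀ n, 1 ≤ n → c' n * c' (n - 1) = a' n)
    (hrec : ∀ n, 1 ≤ n →
      δ n * a' (n - 1) + δ (n - 1) * a' n = if Even n then c' (n - 1) ^ K else 0) :
    ∀ n : ℕ, |a' (2 * n + 1)| = |a' (2 * n)| ∧ |a' (2 * n)| ≤ (n : ℝ) + 1 := by
  -- odd-index equality
  have habs : ∀ n, |a' (2 * n + 1)| = |a' (2 * n)| := by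
    intro n
    have h := hrec (2 * n + 1) (by omega)
    rw [if_neg (by simp [Nat.even_add_one, Nat.even_mul])] at h
    have e : 2 * n + 1 - 1 = 2 * n := rfl
    rw [e] at h
    have h2 : δ (2 * n) * a' (2 * n + 1) = -(δ (2 * n + 1) * a' (2 * n)) := by linarith
    have := congrArg abs h2
    rwa [abs_neg, abs_mul, abs_mul, hδ, hδ, one_mul, one_mul] at this
  -- |c'| at odd indices is 1
  have hcodd : ∀ m, |c' (2 * m + 1)| = 1 := by
    intro m
    induction m with
    | zero =>
      have h1 : |a' 1| = |a' 0| := by simpa using habs 0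
      have h2 : a' 1 = c' 1 * c' 0 := (hca 1 le_rfl).symm
      rw [h2, ha0, hc0, mul_one] at h1
      simpa using h1
    | succ m ih =>
      have h := hrec (2 * m + 3) (by omega)
      rw [if_neg (by simp [Nat.even_add_one, Nat.even_mul, parity_simps])] at h
      have e : 2 * m + 3 - 1 = 2 * m + 2 := rfl
      rw [e] at h
      have ha3 : a' (2 * m + 3) = c' (2 * m + 3) * c' (2 * m + 2) := by
        have := hca (2 * m + 3) (by omega); rw [← this]; congr 1
      have ha2 : a' (2 * m + 2) = c' (2 * m + 2) * c' (2 * m + 1) := by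
        have := hca (2 * m + 2) (by omega); rw [← this]; congr 1
      rw [ha3, ha2] at h
      have hkey : δ (2 * m + 2) * c' (2 * m + 3) =
          -(δ (2 * m + 3) * c' (2 * m + 1)) := by
        have hcne := hc (2 * m + 2)
        have : c' (2 * m + 2) *
            (δ (2 * m + 3) * c' (2 * m + 1) + δ (2 * m + 2) * c' (2 * m + 3)) = 0 := by
          ring_nf; ring_nf at h; linarith
        have := (mul_eq_zero.mp this).resolve_left hcne
        linarith
      have := congrArg abs hkey
      rw [abs_neg, abs_mul, abs_mul, hδ, hδ, one_mul, one_mul, ih] at this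
      have e2 : 2 * (m + 1) + 1 = 2 * m + 3 := by ring
      rw [e2]; exact this
  -- bound at even indices
  have hbound : ∀ n, |a' (2 * n)| ≤ (n : ℝ) + 1 := by
    intro n
    induction n with
    | zero => simp [ha0]
    | succ n ih =>
      have h := hrec (2 * n + 2) (by omega)
      rw [if_pos (by exact ⟨n + 1, by ring⟩)] at h
      have e : 2 * n + 2 - 1 = 2 * n + 1 := rfl
      rw [e] at h
      have hck : |c' (2 * n + 1) ^ K| = 1 := by
        rw [abs_pow, hcodd n, one_pow]
      have h2 : δ (2 * n + 1) * a' (2 * n + 2) =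
          c' (2 * n + 1) ^ K - δ (2 * n + 2) * a' (2 * n + 1) := by linarith
      have h3 : |a' (2 * n + 2)| ≤ |c' (2 * n + 1) ^ K| + |a' (2 * n + 1)| := by
        calc |a' (2 * n + 2)| = |δ (2 * n + 1) * a' (2 * n + 2)| := by
              rw [abs_mul, hδ, one_mul]
          _ = |c' (2 * n + 1) ^ K - δ (2 * n + 2) * a' (2 * n + 1)| := by rw [h2]
          _ ≤ |c' (2 * n + 1) ^ K| + |δ (2 * n + 2) * a' (2 * n + 1)| := abs_sub _ _
          _ = |c' (2 * n + 1) ^ K| + |a' (2 * n + 1)| := by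
              rw [abs_mul, hδ, one_mul]
      rw [hck, habs n] at h3
      have e2 : 2 * (n + 1) = 2 * n + 2 := by ring
      rw [e2]
      push_cast
      linarith
  intro n
  exact ⟨habs n, hbound n⟩
end

section
/- Let K >= 4 be an integer and set N = K-2, M = N^2 - 1. Let T1 be the closed triangle with vertices (0,0), (MN, 0), (N(M+N), K*N^2), and let T2 be the closed triangle with vertices (0,0), ((M+N)(N-1), 0), (N(M+N), (N+1)(M+N)). Let S be the set of integer lattice points lying in T1 ∪ T2, with the origin removed. Then the convex hull of S (in R^2) equals the convex hull of the seven points (MN, 0), (N(M+N), (N+1)(M+N)), (N(M+N), K*N^2), (M+N, K*N), (N, N+1), (1,1), (1,0). -/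
lemma tri_mem (A B C p : ℝ × ℝ)
    (hd : 0 < (B.1-A.1)*(C.2-A.2)-(B.2-A.2)*(C.1-A.1))
    (h1 : 0 ≤ (B.1-A.1)*(p.2-A.2)-(B.2-A.2)*(p.1-A.1))
    (h2 : (C.1-A.1)*(p.2-A.2)-(C.2-A.2)*(p.1-A.1) ≤ 0)
    (h3 : 0 ≤ (C.1-B.1)*(p.2-B.2)-(C.2-B.2)*(p.1-B.1)) :
    p ∈ convexHull ℝ ({A, B, C} : Set (ℝ × ℝ)) := by
  have hd' : ((B.1-A.1)*(C.2-A.2)-(B.2-A.2)*(C.1-A.1)) ≠ 0 := ne_of_gt hd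
  set d := (B.1-A.1)*(C.2-A.2)-(B.2-A.2)*(C.1-A.1) with hdd
  set e1 := (B.1-A.1)*(p.2-A.2)-(B.2-A.2)*(p.1-A.1) with he1
  set e2 := (C.1-A.1)*(p.2-A.2)-(C.2-A.2)*(p.1-A.1) with he2
  set e3 := (C.1-B.1)*(p.2-B.2)-(C.2-B.2)*(p.1-B.1) with he3
  have key : (e3/d) • A + (-e2/d) • B + (e1/d) • C = p := by
    have h1x : (e3/d) * A.1 + (-e2/d) * B.1 + (e1/d) * C.1 = p.1 := by
      field_simp
      rw [he1, he2, he3, hdd]; ring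
    have h1y : (e3/d) * A.2 + (-e2/d) * B.2 + (e1/d) * C.2 = p.2 := by
      field_simp
      rw [he1, he2, he3, hdd]; ring
    exact Prod.ext h1x h1y
  have hsum : (e3/d) + (-e2/d) + (e1/d) = 1 := by
    field_simp
    rw [he1, he2, he3, hdd]; ring
  have hmem := (convex_convexHull ℝ ({A,B,C} : Set (ℝ × ℝ))).sum_mem
      (t := (Finset.univ : Finset (Fin 3))) (w := ![e3/d, -e2/d, e1/d]) (z := ![A,B,C])
      (by intro i _
          fin_cases i
          · exact div_nonneg h3 hd.le
          · exact div_nonneg (by linarith) hd.le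
          · exact div_nonneg h1 hd.le)
      (by simp only [Fin.sum_univ_three]
          simpa using hsum)
      (by intro i _
          fin_cases i
          · exact subset_convexHull ℝ _ (by simp)
          · exact subset_convexHull ℝ _ (by simp)
          · exact subset_convexHull ℝ _ (by simp))
  simpa [Fin.sum_univ_three, key] using hmem

lemma hull3_le (α β γ : ℝ) (A B C p : ℝ × ℝ)
    (hp : p ∈ convexHull ℝ ({A,B,C} : Set (ℝ × ℝ)))
    (hA : α*A.1+β*A.2 ≤ γ) (hB : α*B.1+β*B.2 ≤ γ) (hC : α*C.1+β*C.2 ≤ γ) :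
    α*p.1+β*p.2 ≤ γ := by
  have hlin : IsLinearMap ℝ (fun q : ℝ × ℝ => α*q.1+β*q.2) :=
    ⟨fun u v => by simp; ring, fun c u => by simp [smul_eq_mul]; ring⟩
  have hsub : ({A,B,C} : Set (ℝ × ℝ)) ⊆ {q : ℝ × ℝ | α*q.1+β*q.2 ≤ γ} := by
    rintro q (rfl | rfl | rfl) <;> assumption
  exact convexHull_min hsub (convex_halfSpace_le hlin γ) hp


set_option maxHeartbeats 2000000 in
lemma core (c x y : ℝ) (P1 P2 P3 P4 P5 P6 P7 : ℝ × ℝ)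
    (hP1 : P1 = ((((c-2)^2-1)*(c-2), 0) : ℝ × ℝ))
    (hP2 : P2 = (((c-2)*((c-2)^2+(c-2)-1), (c-1)*((c-2)^2+(c-2)-1)) : ℝ × ℝ))
    (hP3 : P3 = (((c-2)*((c-2)^2+(c-2)-1), c*(c-2)^2) : ℝ × ℝ))
    (hP4 : P4 = (((c-2)^2+(c-2)-1, c*(c-2)) : ℝ × ℝ))
    (hP5 : P5 = ((c-2, c-1) : ℝ × ℝ))
    (hP6 : P6 = (((1:ℝ),(1:ℝ)) : ℝ × ℝ))
    (hP7 : P7 = (((1:ℝ),(0:ℝ)) : ℝ × ℝ))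
    (hc : 4 ≤ c) (hy0 : 0 ≤ y) (hx1 : 1 ≤ x)
    (h2 : (c*(c-2)^2 - 1) * x - (c-2)^2 * y ≤ (c*(c-2)^2 - 1) * (((c-2)^2-1)*(c-2)))
    (h3 : x ≤ (c-2)*((c-2)^2+(c-2)-1))
    (h4 : ((c-2)^2+(c-2)-1) * y ≤ c*(c-2)*x)
    (h5 : 1 ≤ ((c-2)^2+(c-2)-1)*x - ((c-2)^2-1)*y)
    (h6 : 1 ≤ (c-2)*x - (c-3)*y) :
    (x,y) ∈ convexHull ℝ ({P1,P2,P3,P4,P5,P6,P7} : Set (ℝ × ℝ)) := by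
  subst hP1 hP2 hP3 hP4 hP5 hP6 hP7
  rcases le_or_gt (((c-2)*((c-2)^2+(c-2)-1) - 1)*y - ((c-1)*((c-2)^2+(c-2)-1))*(x-1)) 0 with hc2|hc2
  · -- triangle O P1 P2
    refine convexHull_mono (show ({((1:ℝ),(0:ℝ)), (((c-2)^2-1)*(c-2), 0),
        ((c-2)*((c-2)^2+(c-2)-1), (c-1)*((c-2)^2+(c-2)-1))} : Set (ℝ×ℝ)) ⊆ _ by
        intro q hq; simp only [Set.mem_insert_iff, Set.mem_singleton_iff] at hq ⊢; tauto)
      (tri_mem _ _ _ _ ?_ ?_ ?_ ?_) <;> dsimp only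
    · nlinarith [hc, sq_nonneg (c-4), sq_nonneg ((c-4)^2), sq_nonneg ((c-4)*(c-4)^2)]
    · nlinarith [mul_nonneg (show (0:ℝ) ≤ ((c-2)^2-1)*(c-2)-1 by nlinarith [hc]) hy0]
    · nlinarith [hc2]
    · nlinarith [h2]
  · rcases le_or_gt (((c-2)*((c-2)^2+(c-2)-1) - 1)*y - (c*(c-2)^2)*(x-1)) 0 with hc3|hc3
    · -- triangle O P2 P3
      refine convexHull_mono (show ({((1:ℝ),(0:ℝ)),
          ((c-2)*((c-2)^2+(c-2)-1), (c-1)*((c-2)^2+(c-2)-1)),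
          ((c-2)*((c-2)^2+(c-2)-1), c*(c-2)^2)} : Set (ℝ×ℝ)) ⊆ _ by
          intro q hq; simp only [Set.mem_insert_iff, Set.mem_singleton_iff] at hq ⊢; tauto)
        (tri_mem _ _ _ _ ?_ ?_ ?_ ?_) <;> dsimp only
      · nlinarith [hc, sq_nonneg (c-4), sq_nonneg ((c-4)^2), sq_nonneg ((c-4)*(c-4)^2)]
      · nlinarith [hc2]
      · nlinarith [hc3]
      · nlinarith [h3]
    · rcases le_or_gt ((((c-2)^2+(c-2)-1) - 1)*y - (c*(c-2))*(x-1)) 0 with hc4|hc4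
      · -- triangle O P3 P4
        refine convexHull_mono (show ({((1:ℝ),(0:ℝ)),
            ((c-2)*((c-2)^2+(c-2)-1), c*(c-2)^2),
            ((c-2)^2+(c-2)-1, c*(c-2))} : Set (ℝ×ℝ)) ⊆ _ by
            intro q hq; simp only [Set.mem_insert_iff, Set.mem_singleton_iff] at hq ⊢; tauto)
          (tri_mem _ _ _ _ ?_ ?_ ?_ ?_) <;> dsimp only
        · nlinarith [hc, sq_nonneg (c-4), sq_nonneg ((c-4)^2)]
        · nlinarith [hc3]
        · nlinarith [hc4]
        · nlinarith [mul_nonneg (show (0:ℝ) ≤ c-3 by linarith)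
            (show (0:ℝ) ≤ c*(c-2)*x - ((c-2)^2+(c-2)-1)*y by linarith [h4])]
      · rcases le_or_gt (((c-2) - 1)*y - (c-1)*(x-1)) 0 with hc5|hc5
        · -- triangle O P4 P5
          refine convexHull_mono (show ({((1:ℝ),(0:ℝ)),
              ((c-2)^2+(c-2)-1, c*(c-2)), (c-2, c-1)} : Set (ℝ×ℝ)) ⊆ _ by
              intro q hq; simp only [Set.mem_insert_iff, Set.mem_singleton_iff] at hq ⊢; tauto)
            (tri_mem _ _ _ _ ?_ ?_ ?_ ?_) <;> dsimp only
          · nlinarith [hc, sq_nonneg (c-4)]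
          · nlinarith [hc4]
          · nlinarith [hc5]
          · nlinarith [h5]
        · -- triangle O P5 P6
          refine convexHull_mono (show ({((1:ℝ),(0:ℝ)),
              (c-2, c-1), ((1:ℝ),(1:ℝ))} : Set (ℝ×ℝ)) ⊆ _ by
              intro q hq; simp only [Set.mem_insert_iff, Set.mem_singleton_iff] at hq ⊢; tauto)
            (tri_mem _ _ _ _ ?_ ?_ ?_ ?_) <;> dsimp only
          · nlinarith [hc]
          · nlinarith [hc5]
          · nlinarith [hx1]
          · nlinarith [h6]



set_option maxHeartbeats 4000000 in

theorem stmt15 (K N M : ℤ) (hK : 4 ≤ K) (hN : N = K - 2) (hM : M = N ^ 2 - 1)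
    (T1 T2 : Set (ℝ × ℝ))
    (hT1 : T1 = convexHull ℝ
      ({((0 : ℝ), (0 : ℝ)), (((M * N : ℤ) : ℝ), 0),
        (((N * (M + N) : ℤ) : ℝ), ((K * N ^ 2 : ℤ) : ℝ))} : Set (ℝ × ℝ)))
    (hT2 : T2 = convexHull ℝ
      ({((0 : ℝ), (0 : ℝ)), ((((M + N) * (N - 1) : ℤ) : ℝ), 0),
        (((N * (M + N) : ℤ) : ℝ), (((N + 1) * (M + N) : ℤ) : ℝ))} : Set (ℝ × ℝ)))
    (S : Set (ℝ × ℝ))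
    (hS : S = {p : ℝ × ℝ | (∃ z : ℤ × ℤ, p = ((z.1 : ℝ), (z.2 : ℝ))) ∧
      p ∈ T1 ∪ T2} \ {((0 : ℝ), (0 : ℝ))}) :
    convexHull ℝ S = convexHull ℝ
      ({(((M * N : ℤ) : ℝ), 0),
        (((N * (M + N) : ℤ) : ℝ), (((N + 1) * (M + N) : ℤ) : ℝ)),
        (((N * (M + N) : ℤ) : ℝ), ((K * N ^ 2 : ℤ) : ℝ)),
        (((M + N : ℤ) : ℝ), ((K * N : ℤ) : ℝ)),
        (((N : ℤ) : ℝ), ((N + 1 : ℤ) : ℝ)),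
        ((1 : ℝ), (1 : ℝ)), ((1 : ℝ), (0 : ℝ))} : Set (ℝ × ℝ)) := by
  subst hN
  subst hM
  have hc : (4:ℝ) ≤ (K:ℝ) := by exact_mod_cast hK
  have hk2 : (0:ℝ) < ((K:ℝ))-2 := by linarith
  have hk3 : (0:ℝ) ≤ ((K:ℝ))-3 := by linarith
  have hm0 : (0:ℝ) < (((K:ℝ))-2)^2-1 := by nlinarith [hc]
  have hmn0 : (0:ℝ) < ((((K:ℝ))-2)^2+(((K:ℝ))-2)-1) := by nlinarith [hc]
  have hmn1 : (0:ℝ) < ((((K:ℝ))-2)^2-1)*(((K:ℝ))-2) := mul_pos hm0 hk2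
  have hkn20 : (0:ℝ) < ((K:ℝ))*(((K:ℝ))-2)^2 := by nlinarith [hc]
  have hb20 : (0:ℝ) ≤ ((((K:ℝ))-2)^2+(((K:ℝ))-2)-1)*(((K:ℝ))-3) := mul_nonneg hmn0.le hk3
  apply Set.Subset.antisymm
  · apply convexHull_min ?_ (convex_convexHull ℝ _)
    rintro p hp
    rw [hS] at hp
    obtain ⟨⟨⟨z, hz⟩, hun⟩, hne0⟩ := hp
    subst hz
    have hne : ¬(z.1 = 0 ∧ z.2 = 0) := by
      rintro ⟨h1, h2⟩
      exact hne0 (by simp [Set.mem_singleton_iff, h1, h2])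
    have pack : (0:ℝ) ≤ ((z.2 : ℤ) : ℝ) ∧ (1:ℤ) ≤ z.1 ∧
        (((K:ℝ))*(((K:ℝ))-2)^2 - 1) * ((z.1 : ℤ) : ℝ) - (((K:ℝ))-2)^2 * ((z.2 : ℤ) : ℝ) ≤ (((K:ℝ))*(((K:ℝ))-2)^2 - 1) * (((((K:ℝ))-2)^2-1)*(((K:ℝ))-2)) ∧
        ((z.1 : ℤ) : ℝ) ≤ (((K:ℝ))-2)*((((K:ℝ))-2)^2+(((K:ℝ))-2)-1) ∧
        ((((K:ℝ))-2)^2+(((K:ℝ))-2)-1) * ((z.2 : ℤ) : ℝ) ≤ ((K:ℝ))*(((K:ℝ))-2)*((z.1 : ℤ) : ℝ) ∧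
        (0:ℝ) < ((((K:ℝ))-2)^2+(((K:ℝ))-2)-1)*((z.1 : ℤ) : ℝ) - ((((K:ℝ))-2)^2-1)*((z.2 : ℤ) : ℝ) ∧
        (0:ℝ) < (((K:ℝ))-2)*((z.1 : ℤ) : ℝ) - (((K:ℝ))-3)*((z.2 : ℤ) : ℝ) := by
      rcases hun with hm|hm
      · rw [hT1] at hm
        push_cast at hm
        have hy0 : (0:ℝ) ≤ ((z.2 : ℤ) : ℝ) := by
          have h := hull3_le 0 (-1) 0 _ _ _ _ hm (by norm_num) (by dsimp only; norm_num)
            (by dsimp only; nlinarith [hkn20])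
          dsimp only at h; linarith
        have hx0 : (0:ℝ) ≤ ((z.1 : ℤ) : ℝ) := by
          have h := hull3_le (-1) 0 0 _ _ _ _ hm (by norm_num) (by dsimp only; nlinarith [hmn1])
            (by dsimp only; nlinarith [hmn0, hk2, mul_pos hk2 hmn0])
          dsimp only at h; linarith
        have H2 : (((K:ℝ))*(((K:ℝ))-2)^2 - 1) * ((z.1 : ℤ) : ℝ) - (((K:ℝ))-2)^2 * ((z.2 : ℤ) : ℝ) ≤ (((K:ℝ))*(((K:ℝ))-2)^2 - 1) * (((((K:ℝ))-2)^2-1)*(((K:ℝ))-2)) := by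
          have h := hull3_le (((K:ℝ))*(((K:ℝ))-2)^2 - 1) (-((((K:ℝ))-2)^2)) ((((K:ℝ))*(((K:ℝ))-2)^2 - 1) * (((((K:ℝ))-2)^2-1)*(((K:ℝ))-2))) _ _ _ _ hm
            (by dsimp only; nlinarith [mul_nonneg (by nlinarith [hkn20] : (0:ℝ) ≤ ((K:ℝ))*(((K:ℝ))-2)^2-1) hmn1.le])
            (by dsimp only; nlinarith [])
            (by dsimp only; nlinarith [sq_nonneg (((K:ℝ))-2)])
          dsimp only at h; linarith
        have H3 : ((z.1 : ℤ) : ℝ) ≤ (((K:ℝ))-2)*((((K:ℝ))-2)^2+(((K:ℝ))-2)-1) := by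
          have h := hull3_le 1 0 ((((K:ℝ))-2)*((((K:ℝ))-2)^2+(((K:ℝ))-2)-1)) _ _ _ _ hm
            (by dsimp only; nlinarith [mul_pos hk2 hmn0])
            (by dsimp only; nlinarith [sq_nonneg (((K:ℝ))-2)])
            (by dsimp only; nlinarith [])
          dsimp only at h; linarith
        have H4 : ((((K:ℝ))-2)^2+(((K:ℝ))-2)-1) * ((z.2 : ℤ) : ℝ) ≤ ((K:ℝ))*(((K:ℝ))-2)*((z.1 : ℤ) : ℝ) := by
          have h := hull3_le (-(((K:ℝ))*(((K:ℝ))-2))) ((((K:ℝ))-2)^2+(((K:ℝ))-2)-1) 0 _ _ _ _ hm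
            (by dsimp only; norm_num)
            (by dsimp only; nlinarith [mul_nonneg (by nlinarith [hk2] : (0:ℝ) ≤ ((K:ℝ))*(((K:ℝ))-2)) hmn1.le])
            (by dsimp only; nlinarith [])
          dsimp only at h; linarith
        have hA4 : (0:ℝ) ≤ ((K:ℝ))*(((K:ℝ))-2)*((z.1 : ℤ) : ℝ) - ((((K:ℝ))-2)^2+(((K:ℝ))-2)-1)*((z.2 : ℤ) : ℝ) := by linarith
        have ha1 : (1:ℤ) ≤ z.1 := by
          by_contra hlt
          push_neg at hlt
          have ha0 : (0:ℤ) ≤ z.1 := by exact_mod_cast hx0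
          have haz : z.1 = 0 := by omega
          have hx00 : ((z.1 : ℤ) : ℝ) = 0 := by rw [haz]; simp
          have H4' := H4
          rw [hx00] at H4'
          have hy' : ((z.2 : ℤ) : ℝ) ≤ 0 := by nlinarith [H4', hmn0]
          have hbz : z.2 = 0 := by exact_mod_cast le_antisymm hy' hy0
          exact hne ⟨haz, hbz⟩
        have hx1 : (1:ℝ) ≤ ((z.1 : ℤ) : ℝ) := by exact_mod_cast ha1
        have h4m := mul_nonneg hm0.le hA4
        have h4n := mul_nonneg hk3 hA4
        have hg5 : ((z.1 : ℤ) : ℝ) ≤ ((((K:ℝ))-2)^2+(((K:ℝ))-2)-1)*(((((K:ℝ))-2)^2+(((K:ℝ))-2)-1)*((z.1 : ℤ) : ℝ) - ((((K:ℝ))-2)^2-1)*((z.2 : ℤ) : ℝ)) := by nlinarith [h4m]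
        have hg6 : ((z.1 : ℤ) : ℝ) ≤ ((((K:ℝ))-2)^2+(((K:ℝ))-2)-1)*((((K:ℝ))-2)*((z.1 : ℤ) : ℝ) - (((K:ℝ))-3)*((z.2 : ℤ) : ℝ)) := by
          nlinarith [h4n, mul_nonneg hk3 hx0]
        refine ⟨hy0, ha1, H2, H3, H4, ?_, ?_⟩
        · nlinarith [hg5, hx1, hmn0]
        · nlinarith [hg6, hx1, hmn0]
      · rw [hT2] at hm
        push_cast at hm
        have hy0 : (0:ℝ) ≤ ((z.2 : ℤ) : ℝ) := by
          have h := hull3_le 0 (-1) 0 _ _ _ _ hm (by norm_num) (by dsimp only; norm_num)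
            (by dsimp only; nlinarith [hmn0, hk2, mul_pos hmn0 hk2])
          dsimp only at h; linarith
        have hx0 : (0:ℝ) ≤ ((z.1 : ℤ) : ℝ) := by
          have h := hull3_le (-1) 0 0 _ _ _ _ hm (by norm_num) (by dsimp only; nlinarith [hb20])
            (by dsimp only; nlinarith [mul_pos hk2 hmn0])
          dsimp only at h; linarith
        have H2 : (((K:ℝ))*(((K:ℝ))-2)^2 - 1) * ((z.1 : ℤ) : ℝ) - (((K:ℝ))-2)^2 * ((z.2 : ℤ) : ℝ) ≤ (((K:ℝ))*(((K:ℝ))-2)^2 - 1) * (((((K:ℝ))-2)^2-1)*(((K:ℝ))-2)) := by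
          have h := hull3_le (((K:ℝ))*(((K:ℝ))-2)^2 - 1) (-((((K:ℝ))-2)^2)) ((((K:ℝ))*(((K:ℝ))-2)^2 - 1) * (((((K:ℝ))-2)^2-1)*(((K:ℝ))-2))) _ _ _ _ hm
            (by dsimp only; nlinarith [mul_nonneg (by nlinarith [hkn20] : (0:ℝ) ≤ ((K:ℝ))*(((K:ℝ))-2)^2-1) hmn1.le])
            (by dsimp only; nlinarith [mul_nonneg (by nlinarith [hkn20] : (0:ℝ) ≤ ((K:ℝ))*(((K:ℝ))-2)^2-1) hk2.le])
            (by dsimp only; nlinarith [])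
          dsimp only at h; linarith
        have H3 : ((z.1 : ℤ) : ℝ) ≤ (((K:ℝ))-2)*((((K:ℝ))-2)^2+(((K:ℝ))-2)-1) := by
          have h := hull3_le 1 0 ((((K:ℝ))-2)*((((K:ℝ))-2)^2+(((K:ℝ))-2)-1)) _ _ _ _ hm
            (by dsimp only; nlinarith [mul_pos hk2 hmn0])
            (by dsimp only; nlinarith [hmn0])
            (by dsimp only; nlinarith [])
          dsimp only at h; linarith
        have H4 : ((((K:ℝ))-2)^2+(((K:ℝ))-2)-1) * ((z.2 : ℤ) : ℝ) ≤ ((K:ℝ))*(((K:ℝ))-2)*((z.1 : ℤ) : ℝ) := by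
          have h := hull3_le (-(((K:ℝ))*(((K:ℝ))-2))) ((((K:ℝ))-2)^2+(((K:ℝ))-2)-1) 0 _ _ _ _ hm
            (by dsimp only; norm_num)
            (by dsimp only; nlinarith [mul_nonneg (by nlinarith [hk2] : (0:ℝ) ≤ ((K:ℝ))*(((K:ℝ))-2)) hb20])
            (by dsimp only; nlinarith [hmn0])
          dsimp only at h; linarith
        have H4' : (((K:ℝ))-2) * ((z.2 : ℤ) : ℝ) ≤ (((K:ℝ))-1)*((z.1 : ℤ) : ℝ) := by
          have h := hull3_le (-(((K:ℝ))-1)) (((K:ℝ))-2) 0 _ _ _ _ hm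
            (by dsimp only; norm_num)
            (by dsimp only; nlinarith [mul_nonneg (by linarith : (0:ℝ) ≤ ((K:ℝ))-1) hb20])
            (by dsimp only; nlinarith [])
          dsimp only at h; linarith
        have hA4 : (0:ℝ) ≤ (((K:ℝ))-1)*((z.1 : ℤ) : ℝ) - (((K:ℝ))-2)*((z.2 : ℤ) : ℝ) := by linarith
        have ha1 : (1:ℤ) ≤ z.1 := by
          by_contra hlt
          push_neg at hlt
          have ha0 : (0:ℤ) ≤ z.1 := by exact_mod_cast hx0
          have haz : z.1 = 0 := by omega
          have hx00 : ((z.1 : ℤ) : ℝ) = 0 := by rw [haz]; simp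
          have H4'' := H4
          rw [hx00] at H4''
          have hy' : ((z.2 : ℤ) : ℝ) ≤ 0 := by nlinarith [H4'', hmn0]
          have hbz : z.2 = 0 := by exact_mod_cast le_antisymm hy' hy0
          exact hne ⟨haz, hbz⟩
        have hx1 : (1:ℝ) ≤ ((z.1 : ℤ) : ℝ) := by exact_mod_cast ha1
        have h4m := mul_nonneg hm0.le hA4
        have h4n := mul_nonneg (by nlinarith [hm0] : (0:ℝ) ≤ (((K:ℝ))-3)*(((K:ℝ))-1)) hA4
        have hg5 : ((z.1 : ℤ) : ℝ) ≤ (((K:ℝ))-2)*(((((K:ℝ))-2)^2+(((K:ℝ))-2)-1)*((z.1 : ℤ) : ℝ) - ((((K:ℝ))-2)^2-1)*((z.2 : ℤ) : ℝ)) := by nlinarith [h4m]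
        have hg6 : ((z.1 : ℤ) : ℝ) ≤ (((K:ℝ))-2)*((((K:ℝ))-2)*((z.1 : ℤ) : ℝ) - (((K:ℝ))-3)*((z.2 : ℤ) : ℝ)) := by
          nlinarith [mul_nonneg hk3 hA4]
        refine ⟨hy0, ha1, H2, H3, H4, ?_, ?_⟩
        · nlinarith [hg5, hx1, hk2]
        · nlinarith [hg6, hx1, hk2]
    obtain ⟨hy0, ha1, H2, H3, H4, g5pos, g6pos⟩ := pack
    have hx1 : (1:ℝ) ≤ ((z.1 : ℤ) : ℝ) := by exact_mod_cast ha1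
    have h5z : (1:ℤ) ≤ ((K-2)^2+(K-2)-1) * z.1 - ((K-2)^2-1) * z.2 := by
      have h : (0:ℤ) < ((K-2)^2+(K-2)-1) * z.1 - ((K-2)^2-1) * z.2 := by exact_mod_cast g5pos
      omega
    have h6z : (1:ℤ) ≤ (K-2) * z.1 - (K-3) * z.2 := by
      have h : (0:ℤ) < (K-2) * z.1 - (K-3) * z.2 := by exact_mod_cast g6pos
      omega
    have H5 : (1:ℝ) ≤ ((((K:ℝ))-2)^2+(((K:ℝ))-2)-1)*((z.1 : ℤ) : ℝ) - ((((K:ℝ))-2)^2-1)*((z.2 : ℤ) : ℝ) := by exact_mod_cast h5z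
    have H6 : (1:ℝ) ≤ (((K:ℝ))-2)*((z.1 : ℤ) : ℝ) - (((K:ℝ))-3)*((z.2 : ℤ) : ℝ) := by exact_mod_cast h6z
    exact core ((K:ℝ)) ((z.1 : ℤ) : ℝ) ((z.2 : ℤ) : ℝ) _ _ _ _ _ _ _
      (by simp only [Prod.mk.injEq]; constructor <;> push_cast <;> ring)
      (by simp only [Prod.mk.injEq]; constructor <;> push_cast <;> ring)
      (by simp only [Prod.mk.injEq]; constructor <;> push_cast <;> ring)
      (by simp only [Prod.mk.injEq]; constructor <;> push_cast <;> ring)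
      (by simp only [Prod.mk.injEq]; constructor <;> push_cast <;> ring)
      rfl rfl hc hy0 hx1 (by linarith [H2]) H3 H4 H5 H6
  · apply convexHull_mono
    rintro q hq
    rw [hS]
    simp only [Set.mem_insert_iff, Set.mem_singleton_iff] at hq
    rcases hq with rfl|rfl|rfl|rfl|rfl|rfl|rfl
    · refine ⟨⟨⟨((((K-2)^2-1)*(K-2), 0) : ℤ × ℤ), by norm_num⟩, Or.inl ?_⟩, ?_⟩
      · rw [hT1]
        refine tri_mem _ _ _ _ ?_ ?_ ?_ ?_ <;> dsimp only <;> push_cast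
        · nlinarith [mul_pos hmn1 hkn20]
        · nlinarith []
        · nlinarith [mul_nonneg hkn20.le hmn1.le]
        · nlinarith []
      · intro hq0
        rw [Set.mem_singleton_iff, Prod.mk.injEq] at hq0
        have h1 := hq0.1
        push_cast at h1
        nlinarith [hmn1]
    · refine ⟨⟨⟨((K-2)*((K-2)^2-1+(K-2)), (K-2+1)*((K-2)^2-1+(K-2))) , by norm_num⟩, Or.inr ?_⟩, ?_⟩
      · rw [hT2]
        refine tri_mem _ _ _ _ ?_ ?_ ?_ ?_ <;> dsimp only <;> push_cast
        · nlinarith [mul_pos (mul_pos hmn0 hk2) (mul_pos (by linarith : (0:ℝ) < ((K:ℝ))-1) hmn0), hb20, hk3]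
        · nlinarith [mul_nonneg hb20 (by linarith : (0:ℝ) ≤ (((K:ℝ))-1)*((((K:ℝ))-2)^2+(((K:ℝ))-2)-1)), mul_nonneg hb20 hmn0.le]
        · nlinarith []
        · nlinarith []
      · intro hq0
        rw [Set.mem_singleton_iff, Prod.mk.injEq] at hq0
        have h1 := hq0.1
        push_cast at h1
        nlinarith [mul_pos hk2 hmn0]
    · refine ⟨⟨⟨((K-2)*((K-2)^2-1+(K-2)), K*(K-2)^2), by norm_num⟩, Or.inl ?_⟩, ?_⟩
      · rw [hT1]
        refine tri_mem _ _ _ _ ?_ ?_ ?_ ?_ <;> dsimp only <;> push_cast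
        · nlinarith [mul_pos hmn1 hkn20]
        · nlinarith [mul_pos hmn1 hkn20]
        · nlinarith []
        · nlinarith []
      · intro hq0
        rw [Set.mem_singleton_iff, Prod.mk.injEq] at hq0
        have h1 := hq0.1
        push_cast at h1
        nlinarith [mul_pos hk2 hmn0]
    · refine ⟨⟨⟨((K-2)^2-1+(K-2), K*(K-2)), by norm_num⟩, Or.inl ?_⟩, ?_⟩
      · rw [hT1]
        refine tri_mem _ _ _ _ ?_ ?_ ?_ ?_ <;> dsimp only <;> push_cast
        · nlinarith [mul_pos hmn1 hkn20]
        · nlinarith [mul_nonneg hmn1.le (by nlinarith [hk2] : (0:ℝ) ≤ ((K:ℝ))*(((K:ℝ))-2))]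
        · nlinarith []
        · nlinarith [mul_nonneg (mul_nonneg hkn20.le hm0.le) hk2.le]
      · intro hq0
        rw [Set.mem_singleton_iff, Prod.mk.injEq] at hq0
        have h1 := hq0.1
        push_cast at h1
        nlinarith [hmn0]
    · refine ⟨⟨⟨(K-2, K-2+1), by norm_num⟩, Or.inr ?_⟩, ?_⟩
      · rw [hT2]
        refine tri_mem _ _ _ _ ?_ ?_ ?_ ?_ <;> dsimp only <;> push_cast
        · nlinarith [mul_pos (mul_pos hmn0 hk2) (mul_pos (by linarith : (0:ℝ) < ((K:ℝ))-1) hmn0), hb20, hk3]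
        · nlinarith [mul_nonneg hb20 (by linarith : (0:ℝ) ≤ ((K:ℝ))-1)]
        · nlinarith []
        · nlinarith [mul_nonneg (mul_nonneg (by linarith : (0:ℝ) ≤ ((K:ℝ))-1) hmn0.le)
            (by nlinarith [hmn0] : (0:ℝ) ≤ ((((K:ℝ))-2)^2+(((K:ℝ))-2)-1)*(((K:ℝ))-3) - (((K:ℝ))-2) + 1)]
      · intro hq0
        rw [Set.mem_singleton_iff, Prod.mk.injEq] at hq0
        have h1 := hq0.1
        push_cast at h1
        nlinarith [hk2]
    · refine ⟨⟨⟨(1, 1), by norm_num⟩, Or.inr ?_⟩, ?_⟩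
      · rw [hT2]
        refine tri_mem _ _ _ _ ?_ ?_ ?_ ?_ <;> dsimp only <;> push_cast
        · nlinarith [mul_pos (mul_pos hmn0 hk2) (mul_pos (by linarith : (0:ℝ) < ((K:ℝ))-1) hmn0), hb20, hk3]
        · nlinarith [hb20]
        · nlinarith [hmn0]
        · nlinarith [mul_nonneg hmn0.le
            (by nlinarith [mul_nonneg hb20 (by linarith : (0:ℝ) ≤ ((K:ℝ))-1)] : (0:ℝ) ≤ (((K:ℝ))-1)*(((((K:ℝ))-2)^2+(((K:ℝ))-2)-1)*(((K:ℝ))-3)) - (((K:ℝ))-2))]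
      · intro hq0
        rw [Set.mem_singleton_iff, Prod.mk.injEq] at hq0
        exact absurd hq0.1 (by norm_num)
    · refine ⟨⟨⟨(1, 0), by norm_num⟩, Or.inl ?_⟩, ?_⟩
      · rw [hT1]
        refine tri_mem _ _ _ _ ?_ ?_ ?_ ?_ <;> dsimp only <;> push_cast
        · nlinarith [mul_pos hmn1 hkn20]
        · nlinarith []
        · nlinarith [hkn20]
        · nlinarith [mul_nonneg hkn20.le (by nlinarith [hmn1] : (0:ℝ) ≤ ((((K:ℝ))-2)^2-1)*(((K:ℝ))-2) - 1)]
      · intro hq0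
        rw [Set.mem_singleton_iff, Prod.mk.injEq] at hq0
        exact absurd hq0.1 (by norm_num)
end

section
/- Let K >= 4 be an integer and set N = K-2, M = N^2 - 1. Let P be the convex hull in R^2 of the five points O = (0,0), A = (MN-1, 0), B = (N(M+N)-1, K*N^2-1), C = (M+N-1, K*N-1), D = (N-1, N). Then the number of integer lattice points contained in P equals (K*M*N^3 - K*N^2 + 2N + M + 3)/2. Equivalently, setting m = N(M+N)-1, the quantity m(m+1)/2 + 1 minus this number of lattice points equals (K-2)(K-3)/2. -/
/-!
Count the lattice points column by column. Over an abscissa `x`, the vertical slice of a convex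
polygon runs from the point of its lower edge above `x` to the point of its upper edge above `x`;
both points lie in the polygon by convexity, and the polygon lies on the correct side of each edge
line, so the slice is exactly that segment and contains `⌊upper⌋ + 1 - ⌈lower⌉` lattice points.
Here the upper boundary is `O D C B` and the lower one `O A B`. Along an edge `k • (p, q)` with
`p, q` coprime, the column sums reduce to
`∑_{0 < t < p} ⌊q t / p⌋ = (p - 1) (q - 1) / 2`, which follows from pairing `t` with `p - t`.
-/

open Finset

section FloorSums

variable {p q : ℤ}

lemma Int.neg_ediv_of_not_dvd_of_pos {a : ℤ} (hp : 0 < p) (h : ¬ p ∣ a) :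
    -a / p = -(a / p) - 1 := by
  rw [Int.neg_ediv, if_neg h, Int.sign_eq_one_of_pos hp]

lemma IsCoprime.not_dvd_mul_of_mem_Ioo (hpq : IsCoprime p q) {t : ℤ} (ht : t ∈ Ioo 0 p) :
    ¬ p ∣ q * t := by
  rw [mem_Ioo] at ht
  exact fun h => absurd (Int.le_of_dvd ht.1 (hpq.dvd_of_dvd_mul_left h)) (not_le.2 ht.2)

lemma Int.sum_Ioc_add_left {M : Type*} [AddCommMonoid M] (f : ℤ → M) (c b : ℤ) :
    ∑ x ∈ Ioc c (c + b), f x = ∑ t ∈ Ioc 0 b, f (c + t) := by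
  have h := map_add_left_Ioc 0 b c
  rw [add_zero] at h
  rw [← h, sum_map]
  rfl

lemma Int.sum_Ioc_consecutive {M : Type*} [AddCommMonoid M] (f : ℤ → M) {a b c : ℤ}
    (hab : a ≤ b) (hbc : b ≤ c) :
    ∑ x ∈ Ioc a b, f x + ∑ x ∈ Ioc b c, f x = ∑ x ∈ Ioc a c, f x := by
  rw [← sum_union (Ioc_disjoint_Ioc_of_le le_rfl), Ioc_union_Ioc_eq_Ioc hab hbc]

theorem two_mul_sum_Ioc_mul_ediv (hp : 0 < p) (hpq : IsCoprime p q) :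
    2 * ∑ t ∈ Ioc 0 p, q * t / p = p * q - p + q + 1 := by
  have hpair : ∀ t ∈ Ioo 0 p, q * t / p + q * (p - t) / p = q - 1 := by
    intro t ht
    rw [show q * (p - t) = -(q * t) + q * p by ring, Int.add_mul_ediv_right _ _ hp.ne',
      Int.neg_ediv_of_not_dvd_of_pos hp (hpq.not_dvd_mul_of_mem_Ioo ht)]
    ring
  have hreflect : ∑ t ∈ Ioo 0 p, q * t / p = ∑ t ∈ Ioo 0 p, q * (p - t) / p :=
    sum_nbij' (p - ·) (p - ·) (by intro t; simp; omega) (by intro t; simp; omega)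
      (by simp) (by simp) (by simp)
  have hsum := sum_congr rfl hpair
  rw [sum_add_distrib, ← hreflect, sum_const, nsmul_eq_mul, Int.card_Ioo_of_lt 0 p hp] at hsum
  rw [← Ioo_insert_right hp, sum_insert right_notMem_Ioo, Int.mul_ediv_cancel _ hp.ne']
  linear_combination hsum

theorem two_mul_sum_Ioc_zero_mul_mul_ediv (hp : 0 < p) (hpq : IsCoprime p q) {k : ℤ}
    (hk : 0 ≤ k) : 2 * ∑ t ∈ Ioc 0 (k * p), q * t / p = k * (k * p * q - p + q + 1) := by
  induction k, hk using Int.leInduction with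
  | base => simp
  | succ k hk ih =>
    have hshift : ∑ t ∈ Ioc (k * p) ((k + 1) * p), q * t / p
        = ∑ t ∈ Ioc 0 p, (q * t / p + k * q) := by
      rw [add_one_mul, Int.sum_Ioc_add_left]
      refine sum_congr rfl fun t _ => ?_
      rw [show q * (k * p + t) = q * t + k * q * p by ring, Int.add_mul_ediv_right _ _ hp.ne']
    rw [← Int.sum_Ioc_consecutive _ (mul_nonneg hk hp.le) (by nlinarith), hshift,
      sum_add_distrib, sum_const, nsmul_eq_mul, Int.card_Ioc_of_le 0 p hp.le]
    linear_combination ih + two_mul_sum_Ioc_mul_ediv hp hpq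

-- Division by a positive integer rounds down, so these are the floor and the ceiling of the height
-- at `x` of the line through `u` and `u'`.
def floorLine (u u' : ℤ × ℤ) (x : ℤ) : ℤ := u.2 + (u'.2 - u.2) * (x - u.1) / (u'.1 - u.1)

def ceilLine (u u' : ℤ × ℤ) (x : ℤ) : ℤ := u.2 - (u'.2 - u.2) * (u.1 - x) / (u'.1 - u.1)

theorem two_mul_sum_Ioc_floorLine_add_one {u u' : ℤ × ℤ} {k : ℤ} (hk : 0 ≤ k) (hp : 0 < p)
    (hpq : IsCoprime p q) (hu' : u' = (u.1 + k * p, u.2 + k * q)) :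
    2 * ∑ x ∈ Ioc u.1 u'.1, (floorLine u u' x + 1)
      = 2 * k * p * (u.2 + 1) + k * (k * p * q - p + q + 1) := by
  subst hu'
  obtain rfl | hk := hk.eq_or_lt
  · simp
  have hterm (t : ℤ) :
      floorLine u (u.1 + k * p, u.2 + k * q) (u.1 + t) + 1 = q * t / p + (u.2 + 1) := by
    rw [floorLine, show (u.2 + k * q - u.2) * (u.1 + t - u.1) = k * (q * t) by ring,
      show u.1 + k * p - u.1 = k * p by ring, Int.mul_ediv_mul_of_pos _ _ hk]
    ring
  simp only [Int.sum_Ioc_add_left, hterm]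
  rw [sum_add_distrib, sum_const, nsmul_eq_mul, Int.card_Ioc_of_le 0 _ (by positivity)]
  linear_combination two_mul_sum_Ioc_zero_mul_mul_ediv hp hpq hk.le

theorem two_mul_sum_Ioc_ceilLine {u u' : ℤ × ℤ} (hp : 0 < p) (hpq : IsCoprime p q)
    (hu' : u' = (u.1 + p, u.2 + q)) :
    2 * ∑ x ∈ Ioc u.1 u'.1, ceilLine u u' x = 2 * p * u.2 + p * q + p + q - 1 := by
  subst hu'
  have hterm : ∀ t ∈ Ioo 0 p,
      ceilLine u (u.1 + p, u.2 + q) (u.1 + t) = q * t / p + (u.2 + 1) := by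
    intro t ht
    rw [ceilLine, show (u.2 + q - u.2) * (u.1 - (u.1 + t)) = -(q * t) by ring,
      show u.1 + p - u.1 = p by ring,
      Int.neg_ediv_of_not_dvd_of_pos hp (hpq.not_dvd_mul_of_mem_Ioo ht)]
    ring
  have htop : ceilLine u (u.1 + p, u.2 + q) (u.1 + p) = u.2 + q := by
    rw [ceilLine, show (u.2 + q - u.2) * (u.1 - (u.1 + p)) = -q * p by ring,
      show u.1 + p - u.1 = p by ring, Int.mul_ediv_cancel _ hp.ne']
    ring
  have hfloor := two_mul_sum_Ioc_mul_ediv hp hpq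
  rw [← Ioo_insert_right hp, sum_insert right_notMem_Ioo, Int.mul_ediv_cancel _ hp.ne'] at hfloor
  rw [Int.sum_Ioc_add_left, ← Ioo_insert_right hp, sum_insert right_notMem_Ioo, htop,
    sum_congr rfl hterm, sum_add_distrib, sum_const, nsmul_eq_mul, Int.card_Ioo_of_lt 0 p hp]
  linear_combination hfloor

end FloorSums

section Geometry

noncomputable def lineAt (U U' : ℝ × ℝ) (x : ℝ) : ℝ :=
  U.2 + (U'.2 - U.2) / (U'.1 - U.1) * (x - U.1)

variable {U U' : ℝ × ℝ}

lemma le_lineAt_iff (h : U.1 < U'.1) {x y : ℝ} :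
    y ≤ lineAt U U' x ↔ (U'.1 - U.1) * (y - U.2) ≤ (U'.2 - U.2) * (x - U.1) := by
  rw [lineAt, ← sub_le_iff_le_add', div_mul_eq_mul_div, le_div_iff₀ (sub_pos.2 h), mul_comm]

lemma lineAt_le_iff (h : U.1 < U'.1) {x y : ℝ} :
    lineAt U U' x ≤ y ↔ (U'.2 - U.2) * (x - U.1) ≤ (U'.1 - U.1) * (y - U.2) := by
  rw [lineAt, ← le_sub_iff_add_le', div_mul_eq_mul_div, div_le_iff₀ (sub_pos.2 h),
    mul_comm (y - _)]

lemma lineAt_mul_add_mul {a b : ℝ} (hab : a + b = 1) (x y : ℝ) :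
    lineAt U U' (a * x + b * y) = a * lineAt U U' x + b * lineAt U U' y := by
  simp only [lineAt]
  linear_combination ((U'.2 - U.2) / (U'.1 - U.1) * U.1 - U.2) * hab

lemma convex_setOf_le_lineAt (U U' : ℝ × ℝ) :
    Convex ℝ {z : ℝ × ℝ | z.2 ≤ lineAt U U' z.1} := by
  intro z hz w hw a b ha hb hab
  simp only [Set.mem_ofPred_eq, Prod.fst_add, Prod.snd_add, Prod.smul_fst, Prod.smul_snd,
    smul_eq_mul, lineAt_mul_add_mul hab] at *
  nlinarith [mul_le_mul_of_nonneg_left hz ha, mul_le_mul_of_nonneg_left hw hb]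

lemma convex_setOf_lineAt_le (U U' : ℝ × ℝ) :
    Convex ℝ {z : ℝ × ℝ | lineAt U U' z.1 ≤ z.2} := by
  intro z hz w hw a b ha hb hab
  simp only [Set.mem_ofPred_eq, Prod.fst_add, Prod.snd_add, Prod.smul_fst, Prod.smul_snd,
    smul_eq_mul, lineAt_mul_add_mul hab] at *
  nlinarith [mul_le_mul_of_nonneg_left hz ha, mul_le_mul_of_nonneg_left hw hb]

lemma mk_lineAt_mem_segment (h : U.1 < U'.1) {x : ℝ} (hx : x ∈ Set.Icc U.1 U'.1) :
    (x, lineAt U U' x) ∈ segment ℝ U U' := by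
  have hd : 0 < U'.1 - U.1 := sub_pos.2 h
  rw [segment_eq_image_lineMap]
  refine ⟨(x - U.1) / (U'.1 - U.1), ⟨div_nonneg (by linarith [hx.1]) hd.le,
    (div_le_one hd).2 (by linarith [hx.2])⟩, ?_⟩
  ext <;> simp only [AffineMap.lineMap_apply_module, Prod.fst_add, Prod.snd_add, Prod.smul_fst,
    Prod.smul_snd, smul_eq_mul, lineAt] <;> field_simp <;> ring

lemma Convex.mk_mem_of_le_of_le {P : Set (ℝ × ℝ)} (hP : Convex ℝ P) {x a b y : ℝ}
    (ha : (x, a) ∈ P) (hb : (x, b) ∈ P) (hay : a ≤ y) (hyb : y ≤ b) : (x, y) ∈ P :=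
  hP.segment_subset ha hb <| by
    rw [← Prod.image_mk_segment_right, segment_eq_Icc (hay.trans hyb)]
    exact ⟨y, ⟨hay, hyb⟩, rfl⟩

structure IsUpperEdge (P : Set (ℝ × ℝ)) (U U' : ℝ × ℝ) : Prop where
  left_mem : U ∈ P
  right_mem : U' ∈ P
  fst_lt : U.1 < U'.1
  le_lineAt : ∀ z ∈ P, z.2 ≤ lineAt U U' z.1

structure IsLowerEdge (P : Set (ℝ × ℝ)) (U U' : ℝ × ℝ) : Prop where
  left_mem : U ∈ P
  right_mem : U' ∈ P
  fst_lt : U.1 < U'.1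
  lineAt_le : ∀ z ∈ P, lineAt U U' z.1 ≤ z.2

variable {P : Set (ℝ × ℝ)} {L L' : ℝ × ℝ}

theorem Convex.mk_mem_iff_of_edges (hP : Convex ℝ P) (hU : IsUpperEdge P U U')
    (hL : IsLowerEdge P L L') {x : ℝ} (hxU : x ∈ Set.Icc U.1 U'.1)
    (hxL : x ∈ Set.Icc L.1 L'.1) (y : ℝ) :
    (x, y) ∈ P ↔ lineAt L L' x ≤ y ∧ y ≤ lineAt U U' x :=
  ⟨fun h => ⟨hL.lineAt_le _ h, hU.le_lineAt _ h⟩, fun h => hP.mk_mem_of_le_of_le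
    (hP.segment_subset hL.left_mem hL.right_mem (mk_lineAt_mem_segment hL.fst_lt hxL))
    (hP.segment_subset hU.left_mem hU.right_mem (mk_lineAt_mem_segment hU.fst_lt hxU)) h.1 h.2⟩

theorem Convex.ncard_intFiber (hP : Convex ℝ P) (hU : IsUpperEdge P U U')
    (hL : IsLowerEdge P L L') {x : ℤ} (hxU : (x : ℝ) ∈ Set.Icc U.1 U'.1)
    (hxL : (x : ℝ) ∈ Set.Icc L.1 L'.1) :
    ({y : ℤ | ((x : ℝ), (y : ℝ)) ∈ P}.ncard : ℤ) = ⌊lineAt U U' x⌋ + 1 - ⌈lineAt L L' x⌉ := by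
  have hfiber : {y : ℤ | ((x : ℝ), (y : ℝ)) ∈ P} = ↑(Icc ⌈lineAt L L' x⌉ ⌊lineAt U U' x⌋) := by
    ext y
    simp [hP.mk_mem_iff_of_edges hU hL hxU hxL, Int.ceil_le, Int.le_floor]
  have hlow : lineAt L L' x ≤ lineAt U U' x := hL.lineAt_le _ <| hP.segment_subset hU.left_mem
    hU.right_mem (mk_lineAt_mem_segment hU.fst_lt hxU)
  rw [hfiber, Set.ncard_coe_finset, Int.card_Icc_of_le]
  exact (Int.ceil_mono hlow).trans (Int.ceil_le_floor_add_one _)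

end Geometry

theorem Set.ncard_eq_sum_ncard_fiber {α β : Type*} [DecidableEq α] {S : Set (α × β)}
    (hS : S.Finite) {s : Finset α} (h : ∀ z ∈ S, z.1 ∈ s) :
    S.ncard = ∑ x ∈ s, {y | (x, y) ∈ S}.ncard := by
  rw [Set.ncard_eq_toFinset_card _ hS,
    card_eq_sum_card_fiberwise (f := Prod.fst) fun z hz => h z (by simpa using hz)]
  refine sum_congr rfl fun x _ => ?_
  rw [← Set.ncard_coe_finset,
    ← Set.ncard_image_of_injective {y | (x, y) ∈ S} (Prod.mk_right_injective x)]
  congr 1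
  ext ⟨a, b⟩
  simp only [Finset.coe_filter, Set.Finite.mem_toFinset, Set.mem_image, Set.mem_ofPred_eq,
    Prod.mk.injEq]
  constructor
  · rintro ⟨h, rfl⟩
    exact ⟨b, h, rfl, rfl⟩
  · rintro ⟨_, h, rfl, rfl⟩
    exact ⟨h, rfl⟩

section Lattice

def toPlane (z : ℤ × ℤ) : ℝ × ℝ := ((z.1 : ℝ), (z.2 : ℝ))

variable {u u' : ℤ × ℤ}

lemma toPlane_fst_lt (h : u.1 < u'.1) : (toPlane u).1 < (toPlane u').1 := by
  simpa [toPlane] using h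

lemma floor_lineAt_toPlane (h : u.1 < u'.1) (x : ℤ) :
    ⌊lineAt (toPlane u) (toPlane u') x⌋ = floorLine u u' x := by
  refine eq_of_forall_le_iff fun y => ?_
  rw [Int.le_floor, le_lineAt_iff (toPlane_fst_lt h), floorLine, ← sub_le_iff_le_add',
    Int.le_ediv_iff_mul_le (by omega), mul_comm]
  simp only [toPlane]
  norm_cast

lemma ceil_lineAt_toPlane (h : u.1 < u'.1) (x : ℤ) :
    ⌈lineAt (toPlane u) (toPlane u') x⌉ = ceilLine u u' x := by
  refine eq_of_forall_ge_iff fun y => ?_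
  rw [Int.ceil_le, lineAt_le_iff (toPlane_fst_lt h), ceilLine, sub_le_comm,
    Int.le_ediv_iff_mul_le (by omega)]
  simp only [toPlane]
  norm_cast
  constructor <;> intro h <;> linarith

lemma isUpperEdge_convexHull_image {S : Set (ℤ × ℤ)} (hu : u ∈ S) (hu' : u' ∈ S)
    (h : u.1 < u'.1) (hS : ∀ v ∈ S, (u'.1 - u.1) * (v.2 - u.2) ≤ (u'.2 - u.2) * (v.1 - u.1)) :
    IsUpperEdge (convexHull ℝ (toPlane '' S)) (toPlane u) (toPlane u') where
  left_mem := subset_convexHull ℝ _ (Set.mem_image_of_mem _ hu)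
  right_mem := subset_convexHull ℝ _ (Set.mem_image_of_mem _ hu')
  fst_lt := toPlane_fst_lt h
  le_lineAt := fun _ hz => convexHull_min (by
    rintro _ ⟨v, hv, rfl⟩
    rw [Set.mem_ofPred_eq, le_lineAt_iff (toPlane_fst_lt h)]
    simp only [toPlane]
    exact_mod_cast hS v hv) (convex_setOf_le_lineAt _ _) hz

lemma isLowerEdge_convexHull_image {S : Set (ℤ × ℤ)} (hu : u ∈ S) (hu' : u' ∈ S)
    (h : u.1 < u'.1) (hS : ∀ v ∈ S, (u'.2 - u.2) * (v.1 - u.1) ≤ (u'.1 - u.1) * (v.2 - u.2)) :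
    IsLowerEdge (convexHull ℝ (toPlane '' S)) (toPlane u) (toPlane u') where
  left_mem := subset_convexHull ℝ _ (Set.mem_image_of_mem _ hu)
  right_mem := subset_convexHull ℝ _ (Set.mem_image_of_mem _ hu')
  fst_lt := toPlane_fst_lt h
  lineAt_le := fun _ hz => convexHull_min (by
    rintro _ ⟨v, hv, rfl⟩
    rw [Set.mem_ofPred_eq, lineAt_le_iff (toPlane_fst_lt h)]
    simp only [toPlane]
    exact_mod_cast hS v hv) (convex_setOf_lineAt_le _ _) hz

theorem Convex.ncard_intFiber_toPlane {P : Set (ℝ × ℝ)} (hP : Convex ℝ P) {l l' : ℤ × ℤ}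
    (hu : IsUpperEdge P (toPlane u) (toPlane u')) (hl : IsLowerEdge P (toPlane l) (toPlane l'))
    {x : ℤ} (hxu : x ∈ Icc u.1 u'.1) (hxl : x ∈ Icc l.1 l'.1) :
    ({y : ℤ | toPlane (x, y) ∈ P}.ncard : ℤ) = floorLine u u' x + 1 - ceilLine l l' x := by
  have hu₁ : u.1 < u'.1 := by simpa [toPlane] using hu.fst_lt
  have hl₁ : l.1 < l'.1 := by simpa [toPlane] using hl.fst_lt
  rw [Finset.mem_Icc] at hxu hxl
  rw [← floor_lineAt_toPlane hu₁, ← ceil_lineAt_toPlane hl₁]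
  exact hP.ncard_intFiber hu hl (by simp [toPlane, hxu]) (by simp [toPlane, hxl])

end Lattice

namespace KuranoMatsuoka

variable (n : ℤ)

-- The paper's vertices for `N = n`, i.e. `K = n + 2` and `M = n ^ 2 - 1`.
def O : ℤ × ℤ := (0, 0)
def A : ℤ × ℤ := (n ^ 3 - n - 1, 0)
def B : ℤ × ℤ := (n ^ 3 + n ^ 2 - n - 1, n ^ 3 + 2 * n ^ 2 - 1)
def C : ℤ × ℤ := (n ^ 2 + n - 2, n ^ 2 + 2 * n - 1)
def D : ℤ × ℤ := (n - 1, n)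

def vertices : Set (ℤ × ℤ) := {O, A n, B n, C n, D n}

noncomputable def polygon : Set (ℝ × ℝ) := convexHull ℝ (toPlane '' vertices n)

variable {n}

lemma forall_mem_vertices {r : ℤ × ℤ → Prop} :
    (∀ v ∈ vertices n, r v) ↔ r O ∧ r (A n) ∧ r (B n) ∧ r (C n) ∧ r (D n) := by
  simp [vertices]

lemma isUpperEdge_O_D (hn : 2 ≤ n) : IsUpperEdge (polygon n) (toPlane O) (toPlane (D n)) := by
  have hμ : 0 ≤ n - 2 := by omega
  refine isUpperEdge_convexHull_image (by simp [vertices]) (by simp [vertices])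
    (by simp [O, D]; omega) (forall_mem_vertices.2 ⟨?_, ?_, ?_, ?_, ?_⟩) <;>
    simp only [O, A, B, C, D] <;> nlinarith [pow_nonneg hμ 2, pow_nonneg hμ 3, pow_nonneg hμ 4]

lemma isUpperEdge_D_C (hn : 2 ≤ n) : IsUpperEdge (polygon n) (toPlane (D n)) (toPlane (C n)) := by
  have hμ : 0 ≤ n - 2 := by omega
  refine isUpperEdge_convexHull_image (by simp [vertices]) (by simp [vertices])
    (by simp [C, D]; nlinarith) (forall_mem_vertices.2 ⟨?_, ?_, ?_, ?_, ?_⟩) <;>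
    simp only [O, A, B, C, D] <;> nlinarith [pow_nonneg hμ 2, pow_nonneg hμ 3, pow_nonneg hμ 4]

lemma isUpperEdge_C_B (hn : 2 ≤ n) : IsUpperEdge (polygon n) (toPlane (C n)) (toPlane (B n)) := by
  have hμ : 0 ≤ n - 2 := by omega
  refine isUpperEdge_convexHull_image (by simp [vertices]) (by simp [vertices])
    (by simp [C, B]; nlinarith) (forall_mem_vertices.2 ⟨?_, ?_, ?_, ?_, ?_⟩) <;>
    simp only [O, A, B, C, D] <;> nlinarith [pow_nonneg hμ 2, pow_nonneg hμ 3, pow_nonneg hμ 4]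

lemma isLowerEdge_O_A (hn : 2 ≤ n) : IsLowerEdge (polygon n) (toPlane O) (toPlane (A n)) := by
  have hμ : 0 ≤ n - 2 := by omega
  refine isLowerEdge_convexHull_image (by simp [vertices]) (by simp [vertices])
    (by simp [O, A]; nlinarith [pow_nonneg hμ 2, pow_nonneg hμ 3])
    (forall_mem_vertices.2 ⟨?_, ?_, ?_, ?_, ?_⟩) <;>
    simp only [O, A, B, C, D] <;> nlinarith [pow_nonneg hμ 2, pow_nonneg hμ 3, pow_nonneg hμ 4]

lemma isLowerEdge_A_B (hn : 2 ≤ n) : IsLowerEdge (polygon n) (toPlane (A n)) (toPlane (B n)) := by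
  have hμ : 0 ≤ n - 2 := by omega
  refine isLowerEdge_convexHull_image (by simp [vertices]) (by simp [vertices])
    (by simp [A, B]; nlinarith) (forall_mem_vertices.2 ⟨?_, ?_, ?_, ?_, ?_⟩) <;>
    simp only [O, A, B, C, D] <;> nlinarith [pow_nonneg hμ 2, pow_nonneg hμ 3, pow_nonneg hμ 4]

lemma polygon_subset_Icc (hn : 2 ≤ n) : polygon n ⊆ Set.Icc (toPlane O) (toPlane (B n)) := by
  have hμ : 0 ≤ n - 2 := by omega
  refine convexHull_min (Set.image_subset_iff.2 (forall_mem_vertices.2 ⟨?_, ?_, ?_, ?_, ?_⟩))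
    (convex_Icc _ _) <;>
    simp only [Set.mem_preimage, Set.mem_Icc, Prod.le_def, toPlane, O, A, B, C, D] <;>
    norm_cast <;> refine ⟨⟨?_, ?_⟩, ?_, ?_⟩ <;> nlinarith [pow_nonneg hμ 2, pow_nonneg hμ 3]

theorem ncard_latticePoints_eq_sum (hn : 2 ≤ n) :
    ({z : ℤ × ℤ | toPlane z ∈ polygon n}.ncard : ℤ)
      = 1 + ∑ x ∈ Ioc O.1 (D n).1, (floorLine O (D n) x + 1)
        + ∑ x ∈ Ioc (D n).1 (C n).1, (floorLine (D n) (C n) x + 1)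
        + ∑ x ∈ Ioc (C n).1 (B n).1, (floorLine (C n) (B n) x + 1)
        - ∑ x ∈ Ioc (A n).1 (B n).1, ceilLine (A n) (B n) x := by
  have hμ : 0 ≤ n - 2 := by omega
  have hbox : {z : ℤ × ℤ | toPlane z ∈ polygon n} ⊆ Set.Icc O (B n) := fun z hz => by
    simpa [toPlane, Prod.le_def] using polygon_subset_Icc hn hz
  rw [Set.ncard_eq_sum_ncard_fiber ((Set.finite_Icc _ _).subset hbox) (s := Icc O.1 (B n).1)
    fun z hz => by
      obtain ⟨⟨h₁, -⟩, h₂, -⟩ := hbox hz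
      exact mem_Icc.2 ⟨h₁, h₂⟩]
  push_cast
  have fiber {u u' l l' : ℤ × ℤ} (hu : IsUpperEdge (polygon n) (toPlane u) (toPlane u'))
      (hl : IsLowerEdge (polygon n) (toPlane l) (toPlane l')) {x : ℤ}
      (hxu : x ∈ Icc u.1 u'.1) (hxl : x ∈ Icc l.1 l'.1) :
      ({y | (x, y) ∈ {z : ℤ × ℤ | toPlane z ∈ polygon n}}.ncard : ℤ)
        = floorLine u u' x + 1 - ceilLine l l' x :=
    (convex_convexHull ℝ _).ncard_intFiber_toPlane hu hl hxu hxl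
  have hOD := isUpperEdge_O_D hn
  have hDC := isUpperEdge_D_C hn
  have hCB := isUpperEdge_C_B hn
  have hOA := isLowerEdge_O_A hn
  have hAB := isLowerEdge_A_B hn
  have hOD₁ : O.1 ≤ (D n).1 := by simp [O, D]; omega
  have hDC₁ : (D n).1 ≤ (C n).1 := by simp [C, D]; nlinarith
  have hCA₁ : (C n).1 ≤ (A n).1 := by simp [C, A]; nlinarith [pow_nonneg hμ 2, pow_nonneg hμ 3]
  have hAB₁ : (A n).1 ≤ (B n).1 := by simp [A, B]; nlinarith
  rw [Icc_eq_cons_Ioc (hOD₁.trans (hDC₁.trans (hCA₁.trans hAB₁))), sum_cons,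
    ← Int.sum_Ioc_consecutive _ (hOD₁.trans (hDC₁.trans hCA₁)) hAB₁,
    ← Int.sum_Ioc_consecutive _ (hOD₁.trans hDC₁) hCA₁,
    ← Int.sum_Ioc_consecutive _ hOD₁ hDC₁,
    fiber hOD hOA (left_mem_Icc.2 hOD₁) (left_mem_Icc.2 (hOD₁.trans (hDC₁.trans hCA₁))),
    sum_congr rfl fun x hx => fiber hOD hOA (Ioc_subset_Icc_self hx)
      (Icc_subset_Icc le_rfl (hDC₁.trans hCA₁) (Ioc_subset_Icc_self hx)),
    sum_congr rfl fun x hx => fiber hDC hOA (Ioc_subset_Icc_self hx)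
      (Icc_subset_Icc hOD₁ hCA₁ (Ioc_subset_Icc_self hx)),
    sum_congr rfl fun x hx => fiber hCB hOA (Icc_subset_Icc le_rfl hAB₁ (Ioc_subset_Icc_self hx))
      (Icc_subset_Icc (hOD₁.trans hDC₁) le_rfl (Ioc_subset_Icc_self hx)),
    sum_congr rfl fun x hx => fiber hCB hAB (Icc_subset_Icc hCA₁ le_rfl (Ioc_subset_Icc_self hx))
      (Ioc_subset_Icc_self hx),
    ← Int.sum_Ioc_consecutive _ hCA₁ hAB₁]
  have hceilOA (x : ℤ) : ceilLine O (A n) x = 0 := by simp [ceilLine, O, A]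
  have hfloorO : floorLine O (D n) O.1 = 0 := by simp [floorLine, O]
  simp only [hceilOA, hfloorO, sub_zero, sum_sub_distrib]
  ring

theorem two_mul_ncard_latticePoints (hn : 2 ≤ n) :
    2 * ({z : ℤ × ℤ | toPlane z ∈ polygon n}.ncard : ℤ)
      = (n + 2) * (n ^ 2 - 1) * n ^ 3 - (n + 2) * n ^ 2 + 2 * n + (n ^ 2 - 1) + 3 := by
  have sOD := two_mul_sum_Ioc_floorLine_add_one (u := O) (u' := D n) (k := 1) (p := n - 1)
    (q := n) zero_le_one (by omega) ⟨-1, 1, by ring⟩ (by simp [O, D])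
  have sDC := two_mul_sum_Ioc_floorLine_add_one (u := D n) (u' := C n) (k := 1)
    (p := n ^ 2 - 1) (q := n ^ 2 + n - 1) zero_le_one (by nlinarith) ⟨-(n + 1), n, by ring⟩
    (by simp [C, D]; constructor <;> ring)
  have sCB := two_mul_sum_Ioc_floorLine_add_one (u := C n) (u' := B n) (k := n - 1)
    (p := n ^ 2 + n - 1) (q := n ^ 2 + 2 * n) (by omega) (by nlinarith) ⟨-(n + 1), n, by ring⟩
    (by simp [B, C]; constructor <;> ring)
  have sAB := two_mul_sum_Ioc_ceilLine (u := A n) (u' := B n) (p := n ^ 2)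
    (q := n ^ 3 + 2 * n ^ 2 - 1) (by positivity) ⟨n + 2, -1, by ring⟩ (by simp [A, B]; ring)
  rw [ncard_latticePoints_eq_sum hn]
  simp only [O, A, B, C, D] at sOD sDC sCB sAB ⊢
  linear_combination sOD + sDC + sCB - sAB

end KuranoMatsuoka

theorem stmt16 (K N M m : ℤ) (hK : 4 ≤ K) (hN : N = K - 2) (hM : M = N ^ 2 - 1)
    (hm : m = N * (M + N) - 1)
    (P : Set (ℝ × ℝ))
    (hP : P = convexHull ℝ
      ({((0 : ℝ), (0 : ℝ)),
        (((M * N - 1 : ℤ) : ℝ), 0),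
        (((N * (M + N) - 1 : ℤ) : ℝ), ((K * N ^ 2 - 1 : ℤ) : ℝ)),
        (((M + N - 1 : ℤ) : ℝ), ((K * N - 1 : ℤ) : ℝ)),
        (((N - 1 : ℤ) : ℝ), ((N : ℤ) : ℝ))} : Set (ℝ × ℝ))) :
    2 * (Set.ncard {z : ℤ × ℤ | ((z.1 : ℝ), (z.2 : ℝ)) ∈ P} : ℤ) =
        K * M * N ^ 3 - K * N ^ 2 + 2 * N + M + 3 ∧
      m * (m + 1) + 2 - 2 * (Set.ncard {z : ℤ × ℤ | ((z.1 : ℝ), (z.2 : ℝ)) ∈ P} : ℤ) =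
        (K - 2) * (K - 3) := by
  obtain rfl : K = N + 2 := by omega
  subst hM hm
  have hpolygon : P = KuranoMatsuoka.polygon N := by
    rw [hP, KuranoMatsuoka.polygon, KuranoMatsuoka.vertices]
    simp only [Set.image_insert_eq, Set.image_singleton, toPlane, KuranoMatsuoka.O,
      KuranoMatsuoka.A, KuranoMatsuoka.B, KuranoMatsuoka.C, KuranoMatsuoka.D]
    push_cast
    ring_nf
  have hcount : 2 * (Set.ncard {z : ℤ × ℤ | ((z.1 : ℝ), (z.2 : ℝ)) ∈ P} : ℤ) = _ :=
    hpolygon ▸ KuranoMatsuoka.two_mul_ncard_latticePoints (by omega : 2 ≤ N)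
  exact ⟨by linear_combination hcount, by linear_combination -hcount⟩
end
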